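/- arXiv:1211.3702 — 8 statements merged into one kernel-verified Lean document; each statement's English description precedes it below -/
import Mathlib

section
/- For every n ≥ 1, the generating function identity (1+x)(1+x²)···(1+xⁿ) / ((1-x^{n+1})(1-x^{n+2})···(1-x^{2n})) = ∏_{i=1}^{n} 1/(1-x^{2i-1}) holds as formal power series. -/
/-!
Euler's argument. Multiplying by `P n = ∏_{i<n} (1 - x^{i+1})`, the numerator becomes
`∏_{i<n} (1 - x^{2i+2})`, and together with the odd factors `1 - x^{2i+1}` this is `P (2n)`,
which is `P n` times the denominator. Since `P n` is a unit, the odd product times the numerator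
is the denominator.
-/

open PowerSeries

theorem Finset.prod_range_two_mul {M : Type*} [CommMonoid M] (f : ℕ → M) (n : ℕ) :
    ∏ i ∈ Finset.range (2 * n), f i =
      (∏ i ∈ Finset.range n, f (2 * i)) * ∏ i ∈ Finset.range n, f (2 * i + 1) := by
  induction n with
  | zero => simp
  | succ n ih =>
    rw [Nat.mul_succ, Finset.prod_range_succ, Finset.prod_range_succ, ih,
      Finset.prod_range_succ, Finset.prod_range_succ]
    ac_rfl

theorem PowerSeries.prod_inv {ι k : Type*} [Field k] (s : Finset ι) (f : ι → k⟦X⟧) :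
    (∏ i ∈ s, f i)⁻¹ = ∏ i ∈ s, (f i)⁻¹ := by
  induction s using Finset.cons_induction with
  | empty => simp
  | cons a s _ ih =>
    rw [Finset.prod_cons, Finset.prod_cons, PowerSeries.mul_inv_rev, mul_comm, ih]

namespace PowerSeries

variable {R : Type*} [CommRing R]

theorem prod_one_add_X_pow_mul_prod_one_sub_X_pow (n : ℕ) :
    (∏ i ∈ Finset.range n, (1 + X ^ (i + 1) : R⟦X⟧)) * ∏ i ∈ Finset.range n, (1 - X ^ (i + 1)) =
      ∏ i ∈ Finset.range n, (1 - X ^ (2 * i + 2)) := by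
  rw [← Finset.prod_mul_distrib]
  refine Finset.prod_congr rfl fun i _ => ?_
  ring

theorem prod_one_sub_X_pow_range_two_mul (n : ℕ) :
    ∏ i ∈ Finset.range (2 * n), (1 - X ^ (i + 1) : R⟦X⟧) =
      (∏ i ∈ Finset.range n, (1 - X ^ (2 * i + 1))) * ∏ i ∈ Finset.range n, (1 - X ^ (2 * i + 2)) :=
  Finset.prod_range_two_mul _ n

theorem prod_one_sub_X_pow_range_add (m n : ℕ) :
    ∏ i ∈ Finset.range (m + n), (1 - X ^ (i + 1) : R⟦X⟧) =
      (∏ i ∈ Finset.range m, (1 - X ^ (i + 1))) * ∏ i ∈ Finset.range n, (1 - X ^ (m + 1 + i)) := by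
  rw [Finset.prod_range_add]
  simp only [add_right_comm m]

theorem prod_one_add_X_pow_mul_prod_one_sub_X_pow_odd (n : ℕ) :
    (∏ i ∈ Finset.range n, (1 + X ^ (i + 1) : R⟦X⟧)) * ∏ i ∈ Finset.range n, (1 - X ^ (2 * i + 1)) =
      ∏ i ∈ Finset.range n, (1 - X ^ (n + 1 + i)) := by
  have hunit : IsUnit (∏ i ∈ Finset.range n, (1 - X ^ (i + 1) : R⟦X⟧)) :=
    isUnit_iff_constantCoeff.2 (by simp [map_prod])
  refine hunit.mul_right_cancel ?_
  rw [mul_right_comm, prod_one_add_X_pow_mul_prod_one_sub_X_pow, mul_comm,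
    ← prod_one_sub_X_pow_range_two_mul, two_mul, prod_one_sub_X_pow_range_add, mul_comm]

end PowerSeries

theorem bounded_gf_eq_odd_gf_general (n : ℕ) :
    (∏ i ∈ Finset.range n, (1 + (PowerSeries.X : PowerSeries ℚ) ^ (i + 1))) *
      (∏ i ∈ Finset.range n, (1 - (PowerSeries.X : PowerSeries ℚ) ^ (n + 1 + i)))⁻¹ =
    ∏ i ∈ Finset.range n, (1 - (PowerSeries.X : PowerSeries ℚ) ^ (2 * i + 1))⁻¹ := by
  have hodd : constantCoeff (∏ i ∈ Finset.range n, (1 - (X : ℚ⟦X⟧) ^ (2 * i + 1))) ≠ 0 := by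
    simp [map_prod]
  have hshifted : constantCoeff (∏ i ∈ Finset.range n, (1 - (X : ℚ⟦X⟧) ^ (n + 1 + i))) ≠ 0 := by
    simp [map_prod]
  rw [← prod_inv, eq_inv_iff_mul_eq_one hodd, mul_right_comm,
    prod_one_add_X_pow_mul_prod_one_sub_X_pow_odd, PowerSeries.mul_inv_cancel _ hshifted]

/-- `(1+x)(1+x²)⋯(1+xⁿ) / ((1-x^{n+1})⋯(1-x^{2n})) = ∏_{i=1}^n 1/(1-x^{2i-1})`
as formal power series over `ℚ`. -/
theorem bounded_gf_eq_odd_gf (n : ℕ) (hn : 1 ≤ n) :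
    (∏ i ∈ Finset.range n, (1 + (PowerSeries.X : PowerSeries ℚ) ^ (i + 1))) *
      (∏ i ∈ Finset.range n, (1 - (PowerSeries.X : PowerSeries ℚ) ^ (n + 1 + i)))⁻¹ =
    ∏ i ∈ Finset.range n, (1 - (PowerSeries.X : PowerSeries ℚ) ^ (2 * i + 1))⁻¹ :=
  bounded_gf_eq_odd_gf_general n
end

section
/- For every n ≥ 1 and every m ≥ 0, the number of partitions of m into parts each at most 2n, with the parts of size at most n being distinct, equals the number of partitions of m into odd parts each at most 2n-1. -/
/-!
Glaisher's bijection. Writing a part as `2 ^ i * b` with `b` odd and splitting it into `2 ^ i`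
copies of `b` turns a partition into one with odd parts, preserving the sum. Conversely, `k`
copies of an odd `b` are merged back by keeping `k % 2` of them and pairing the rest into
`k / 2` copies of `2 * b`, repeating while the part is at most `n`. Among the resulting parts
`b, 2b, 4b, …`, those `≤ n` get the binary digits of `k` as multiplicities and the first one
above `n` gets the remaining quotient; so requiring the parts `≤ n` to be distinct is exactly
what makes the preimage unique.
-/

open Multiset

namespace Glaisher

lemma ordProj_two_mul {a : ℕ} (ha : a ≠ 0) : ordProj[2] (2 * a) = 2 * ordProj[2] a := by
  rw [Nat.ordProj_mul 2 two_ne_zero ha, Nat.Prime.factorization_self Nat.prime_two, pow_one]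

lemma ordCompl_two_mul (a : ℕ) : ordCompl[2] (2 * a) = ordCompl[2] a := by
  simpa using Nat.ordCompl_self_pow_mul a 1 Nat.prime_two

lemma ordCompl_two_pow_mul {b : ℕ} (i : ℕ) (hb : Odd b) : ordCompl[2] (2 ^ i * b) = b :=
  Nat.ordCompl_pow_mul_of_not_dvd i Nat.prime_two hb.not_two_dvd_nat

lemma odd_ordCompl_two {a : ℕ} (ha : a ≠ 0) : Odd (ordCompl[2] a) :=
  Nat.odd_iff.mpr (Nat.two_dvd_ne_zero.mp (Nat.not_dvd_ordCompl Nat.prime_two ha))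

def toOddParts : Multiset ℕ →+ Multiset ℕ where
  toFun s := s.bind fun a => replicate (ordProj[2] a) (ordCompl[2] a)
  map_zero' := zero_bind _
  map_add' s t := add_bind s t _

lemma toOddParts_apply (s : Multiset ℕ) :
    toOddParts s = s.bind fun a => replicate (ordProj[2] a) (ordCompl[2] a) := rfl

lemma toOddParts_singleton (a : ℕ) :
    toOddParts {a} = replicate (ordProj[2] a) (ordCompl[2] a) := singleton_bind _ _

lemma toOddParts_singleton_two_mul {a : ℕ} (ha : a ≠ 0) :
    toOddParts {2 * a} = 2 • toOddParts {a} := by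
  rw [toOddParts_singleton, toOddParts_singleton, ordCompl_two_mul, ordProj_two_mul ha,
    nsmul_replicate]

lemma toOddParts_singleton_of_odd {b : ℕ} (hb : Odd b) : toOddParts {b} = {b} := by
  rw [toOddParts_singleton, Nat.factorization_eq_zero_of_not_dvd hb.not_two_dvd_nat, pow_zero,
    Nat.div_one, replicate_one]

lemma exists_of_mem_toOddParts {s : Multiset ℕ} {x : ℕ} (hx : x ∈ toOddParts s) :
    ∃ a ∈ s, ordCompl[2] a = x := by
  obtain ⟨a, ha, hxa⟩ := mem_bind.1 hx
  exact ⟨a, ha, (eq_of_mem_replicate hxa).symm⟩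

lemma odd_of_mem_toOddParts {s : Multiset ℕ} (hs : ∀ a ∈ s, 0 < a) {x : ℕ}
    (hx : x ∈ toOddParts s) : Odd x := by
  obtain ⟨a, ha, rfl⟩ := exists_of_mem_toOddParts hx
  exact odd_ordCompl_two (hs a ha).ne'

lemma sum_toOddParts (s : Multiset ℕ) : (toOddParts s).sum = s.sum := by
  induction s using Multiset.induction with
  | empty => simp
  | cons a s ih =>
    rw [← singleton_add, _root_.map_add, sum_add, sum_add, ih, toOddParts_singleton,
      sum_replicate, smul_eq_mul, Nat.ordProj_mul_ordCompl_eq_self, sum_singleton]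

lemma toOddParts_filter_ordCompl_eq (s : Multiset ℕ) (b : ℕ) :
    toOddParts (s.filter fun a => ordCompl[2] a = b) = replicate (count b (toOddParts s)) b := by
  rw [← filter_eq', toOddParts_apply, toOddParts_apply, bind_filter, filter_bind]
  refine bind_congr fun a _ => ?_
  split_ifs with h
  · exact (filter_eq_self.2 fun x hx => (eq_of_mem_replicate hx).trans h).symm
  · exact (filter_eq_nil.2 fun x hx hxb => h ((eq_of_mem_replicate hx).symm.trans hxb)).symm

def mergePairs (n a k : ℕ) : Multiset ℕ :=
  if 0 < a ∧ a ≤ n then replicate (k % 2) a + mergePairs n (2 * a) (k / 2) else replicate k a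
termination_by 2 * n - a

section mergePairs

variable {n : ℕ}

lemma mergePairs_zero (a : ℕ) : mergePairs n a 0 = 0 := by
  suffices ∀ k, k = 0 → mergePairs n a k = 0 from this 0 rfl
  intro k hk
  induction a, k using mergePairs.induct n with
  | case1 a k ha ih => rw [mergePairs, if_pos ha, ih (by omega), hk]; rfl
  | case2 a k ha => rw [mergePairs, if_neg ha, hk, replicate_zero]

lemma exists_of_mem_mergePairs {a k x : ℕ} (hx : x ∈ mergePairs n a k) :
    ∃ i, x = 2 ^ i * a ∧ x ≤ max a (2 * n) := by
  induction a, k using mergePairs.induct n with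
  | case1 a k ha ih =>
    rw [mergePairs, if_pos ha, mem_add] at hx
    rcases hx with hx | hx
    · exact ⟨0, by simp [eq_of_mem_replicate hx]⟩
    · obtain ⟨i, rfl, hi⟩ := ih hx
      exact ⟨i + 1, by ring, by omega⟩
  | case2 a k ha =>
    rw [mergePairs, if_neg ha] at hx
    exact ⟨0, by simp [eq_of_mem_replicate hx]⟩

lemma count_mergePairs_le_one {a x : ℕ} (k : ℕ) (ha : 0 < a) (hx : x ≤ n) :
    count x (mergePairs n a k) ≤ 1 := by
  induction a, k using mergePairs.induct n with
  | case1 a k ha' ih =>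
    rw [mergePairs, if_pos ha', count_add, count_replicate]
    split_ifs with hxa
    · subst hxa
      rw [count_eq_zero.2 fun hx' => ?_]
      · omega
      obtain ⟨i, hi, -⟩ := exists_of_mem_mergePairs hx'
      have : 2 * a ≤ 2 ^ i * (2 * a) := Nat.le_mul_of_pos_left _ (by positivity)
      omega
    · simpa using ih (by omega)
  | case2 a k ha' =>
    rw [mergePairs, if_neg ha', count_replicate, if_neg (by omega)]
    omega

lemma sum_mergePairs (a k : ℕ) : (mergePairs n a k).sum = k * a := by
  induction a, k using mergePairs.induct n with
  | case1 a k ha ih =>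
    rw [mergePairs, if_pos ha, sum_add, ih, sum_replicate, smul_eq_mul]
    conv_rhs => rw [← Nat.mod_add_div k 2]
    ring
  | case2 a k ha => rw [mergePairs, if_neg ha, sum_replicate, smul_eq_mul]

lemma toOddParts_mergePairs (a k : ℕ) :
    toOddParts (mergePairs n a k) = k • toOddParts {a} := by
  induction a, k using mergePairs.induct n with
  | case1 a k ha ih =>
    rw [mergePairs, if_pos ha, _root_.map_add, ih, toOddParts_singleton_two_mul ha.1.ne',
      ← nsmul_singleton, _root_.map_nsmul, smul_smul, ← add_nsmul, mul_comm, Nat.mod_add_div]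
  | case2 a k ha => rw [mergePairs, if_neg ha, ← nsmul_singleton, _root_.map_nsmul]

lemma eq_mergePairs {s : Multiset ℕ} {a k : ℕ} (ha : 0 < a) (hs : ∀ x ∈ s, ∃ i, x = 2 ^ i * a)
    (hle : ∀ x ∈ s, x ≤ 2 * n) (hdist : ∀ x ∈ s, x ≤ n → count x s ≤ 1)
    (hsum : s.sum = k * a) : s = mergePairs n a k := by
  induction a, k using mergePairs.induct n generalizing s with
  | case1 a k ha' ih =>
    set t := s.filter (· ≠ a)
    have hsplit : replicate (count a s) a + t = s := by
      rw [← filter_eq', filter_add_not]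
    have hca : count a s ≤ 1 := by
      by_cases has : a ∈ s
      · exact hdist a has ha'.2
      · simp [count_eq_zero.2 has]
    have ht : ∀ x ∈ t, ∃ i, x = 2 ^ i * (2 * a) := by
      intro x hx
      obtain ⟨hxs, hxa⟩ := mem_filter.1 hx
      obtain ⟨_ | i, rfl⟩ := hs x hxs
      · simp at hxa
      · exact ⟨i, by ring⟩
    obtain ⟨q, hq⟩ : 2 * a ∣ t.sum := dvd_sum fun x hx => by
      obtain ⟨i, rfl⟩ := ht x hx
      exact dvd_mul_left _ _
    have hsum' : s.sum = count a s * a + t.sum := by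
      conv_lhs => rw [← hsplit]
      rw [sum_add, sum_replicate, smul_eq_mul]
    have hk : count a s + 2 * q = k :=
      Nat.eq_of_mul_eq_mul_right ha (by rw [← hsum, hsum', hq]; ring)
    rw [mergePairs, if_pos ha', ← ih (by omega) ht
      (fun x hx => hle x (mem_of_mem_filter hx))
      (fun x hx hxn =>
        (count_le_of_le x (filter_le _ s)).trans (hdist x (mem_of_mem_filter hx) hxn))
      (by rw [hq, show k / 2 = q by omega]; ring), show k % 2 = count a s by omega, hsplit]
  | case2 a k ha' =>
    have hsa : ∀ x ∈ s, x = a := by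
      intro x hx
      obtain ⟨_ | i, rfl⟩ := hs x hx
      · simp
      · have : 2 * a ≤ 2 ^ (i + 1) * a := Nat.mul_le_mul_right a (Nat.le_self_pow (by omega) 2)
        have := hle _ hx
        omega
    rw [eq_replicate.2 ⟨rfl, hsa⟩, mergePairs, if_neg ha']
    rw [eq_replicate.2 ⟨rfl, hsa⟩, sum_replicate, smul_eq_mul] at hsum
    rw [Nat.eq_of_mul_eq_mul_right ha hsum]

end mergePairs

def ofOddParts (n : ℕ) (t : Multiset ℕ) : Multiset ℕ :=
  ∑ b ∈ t.toFinset, mergePairs n b (t.count b)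

section ofOddParts

variable {n : ℕ} {t : Multiset ℕ}

lemma exists_of_mem_ofOddParts {x : ℕ} (hx : x ∈ ofOddParts n t) :
    ∃ b ∈ t, ∃ i, x = 2 ^ i * b ∧ x ≤ max b (2 * n) := by
  obtain ⟨b, hb, hxb⟩ := mem_sum.1 hx
  exact ⟨b, mem_toFinset.1 hb, exists_of_mem_mergePairs hxb⟩

lemma sum_ofOddParts (n : ℕ) (t : Multiset ℕ) : (ofOddParts n t).sum = t.sum := by
  rw [ofOddParts, ← coe_sumAddMonoidHom, map_sum, coe_sumAddMonoidHom,
    Finset.sum_multiset_count]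
  exact Finset.sum_congr rfl fun b _ => by rw [sum_mergePairs, smul_eq_mul]

lemma toOddParts_ofOddParts (ht : ∀ b ∈ t, Odd b) : toOddParts (ofOddParts n t) = t := by
  rw [ofOddParts, map_sum]
  conv_rhs => rw [← toFinset_sum_count_nsmul_eq t]
  refine Finset.sum_congr rfl fun b hb => ?_
  rw [toOddParts_mergePairs, toOddParts_singleton_of_odd (ht b (mem_toFinset.1 hb))]

lemma count_ofOddParts (ht : ∀ b ∈ t, Odd b) {x : ℕ} (hx : x ≠ 0) :
    count x (ofOddParts n t) =
      count x (mergePairs n (ordCompl[2] x) (t.count (ordCompl[2] x))) := by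
  rw [ofOddParts, count_sum']
  refine Finset.sum_eq_single _ (fun b hb hbx => count_eq_zero.2 fun hxb => hbx ?_) fun hx' => ?_
  · obtain ⟨i, rfl, -⟩ := exists_of_mem_mergePairs hxb
    exact (ordCompl_two_pow_mul i (ht b (mem_toFinset.1 hb))).symm
  · rw [count_eq_zero.2 (mt mem_toFinset.2 hx'), mergePairs_zero, count_zero]

end ofOddParts

lemma filter_ordCompl_eq_mergePairs {n : ℕ} {s : Multiset ℕ} (hle : ∀ a ∈ s, a ≤ 2 * n)
    (hdist : ∀ a ∈ s, a ≤ n → s.count a ≤ 1) {b : ℕ} (hb : 0 < b) :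
    s.filter (fun a => ordCompl[2] a = b) = mergePairs n b (count b (toOddParts s)) := by
  refine eq_mergePairs hb (fun a ha => ⟨a.factorization 2, ?_⟩)
    (fun a ha => hle a (mem_of_mem_filter ha))
    (fun a ha han =>
      (count_le_of_le a (filter_le _ s)).trans (hdist a (mem_of_mem_filter ha) han))
    (by rw [← sum_toOddParts, toOddParts_filter_ordCompl_eq, sum_replicate, smul_eq_mul])
  rw [← (mem_filter.1 ha).2, Nat.ordProj_mul_ordCompl_eq_self]

lemma ofOddParts_toOddParts {n : ℕ} {s : Multiset ℕ} (hpos : ∀ a ∈ s, 0 < a)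
    (hle : ∀ a ∈ s, a ≤ 2 * n) (hdist : ∀ a ∈ s, a ≤ n → s.count a ≤ 1) :
    ofOddParts n (toOddParts s) = s := by
  have hodd : ∀ b ∈ toOddParts s, Odd b := fun b => odd_of_mem_toOddParts hpos
  ext x
  rcases eq_or_ne x 0 with rfl | hx
  · rw [count_eq_zero.2 fun h => (hpos 0 h).ne rfl, count_eq_zero]
    intro h
    obtain ⟨b, hb, i, hib, -⟩ := exists_of_mem_ofOddParts h
    have := (hodd b hb).pos
    simp_all
  rw [count_ofOddParts hodd hx,
    ← filter_ordCompl_eq_mergePairs hle hdist (Nat.ordCompl_pos 2 hx)]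
  exact count_filter_of_pos rfl

def toOddPartition {m : ℕ} (p : Nat.Partition m) : Nat.Partition m where
  parts := toOddParts p.parts
  parts_pos hx := (odd_of_mem_toOddParts (fun _ => p.parts_pos) hx).pos
  parts_sum := by rw [sum_toOddParts, p.parts_sum]

def ofOddPartition (n : ℕ) {m : ℕ} (q : Nat.Partition m) : Nat.Partition m where
  parts := ofOddParts n q.parts
  parts_pos hx := by
    obtain ⟨b, hb, i, rfl, -⟩ := exists_of_mem_ofOddParts hx
    have := q.parts_pos hb
    positivity
  parts_sum := by rw [sum_ofOddParts, q.parts_sum]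

def boundedEquivOdd (n m : ℕ) :
    {p : Nat.Partition m //
        (∀ x ∈ p.parts, x ≤ 2 * n) ∧ (∀ x ∈ p.parts, x ≤ n → p.parts.count x ≤ 1)} ≃
      {p : Nat.Partition m // ∀ x ∈ p.parts, Odd x ∧ x ≤ 2 * n - 1} where
  toFun p := ⟨toOddPartition p.1, fun x hx => by
    obtain ⟨a, ha, rfl⟩ := exists_of_mem_toOddParts hx
    obtain ⟨k, hk⟩ := odd_ordCompl_two (p.1.parts_pos ha).ne'
    have := (Nat.ordCompl_le a 2).trans (p.2.1 a ha)
    exact ⟨⟨k, hk⟩, by omega⟩⟩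
  invFun q := ⟨ofOddPartition n q.1, fun x hx => by
    obtain ⟨b, hb, i, -, hxb⟩ := exists_of_mem_ofOddParts hx
    have := (q.2 b hb).2
    omega, fun x hx hxn => by
    have hx0 := ((ofOddPartition n q.1).parts_pos hx).ne'
    rw [ofOddPartition, count_ofOddParts (fun b hb => (q.2 b hb).1) hx0]
    exact count_mergePairs_le_one _ (Nat.ordCompl_pos 2 hx0) hxn⟩
  left_inv p := Subtype.ext <| Nat.Partition.ext <|
    ofOddParts_toOddParts (fun _ => p.1.parts_pos) p.2.1 p.2.2
  right_inv q := Subtype.ext <| Nat.Partition.ext <|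
    toOddParts_ofOddParts fun b hb => (q.2 b hb).1

end Glaisher

theorem bounded_eq_odd_count_general (n m : ℕ) :
    Nat.card {p : Nat.Partition m //
        (∀ x ∈ p.parts, x ≤ 2 * n) ∧ (∀ x ∈ p.parts, x ≤ n → p.parts.count x ≤ 1)} =
    Nat.card {p : Nat.Partition m // ∀ x ∈ p.parts, Odd x ∧ x ≤ 2 * n - 1} :=
  Nat.card_congr (Glaisher.boundedEquivOdd n m)

/-- For every `n ≥ 1` and `m ≥ 0`, the number of partitions of `m`
into parts each at most `2n` with the parts of size at most `n` distinct equals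
the number of partitions of `m` into odd parts each at most `2n - 1`. -/
theorem bounded_eq_odd_count (n m : ℕ) (hn : 1 ≤ n) :
    Nat.card {p : Nat.Partition m //
        (∀ x ∈ p.parts, x ≤ 2 * n) ∧ (∀ x ∈ p.parts, x ≤ n → p.parts.count x ≤ 1)} =
    Nat.card {p : Nat.Partition m // ∀ x ∈ p.parts, Odd x ∧ x ≤ 2 * n - 1} :=
  bounded_eq_odd_count_general n m
end

section
/- (Lecture hall generating function) For every n ≥ 1, the formal power series ∑_λ x^{|λ|}, summed over all lecture hall partitions λ of length n, equals ∏_{i=1}^{n} 1/(1-x^{2i-1}). -/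
/-!
A lecture hall partition `λ` of length `n + 1` is determined by its first `n` parts `μ`, again
lecture hall, and by the excess `k` of its last part over the least value `⌈(n + 1) μₙ / n⌉` that
part may take. Every second part of `μ`, starting from `μₙ₋₁`, may be reflected inside the interval
allowed by its two neighbours (which stay put); this is an involution `μ ↦ μ'` of lecture hall
partitions, and a telescoping computation shows that it replaces the alternating sum
`a(μ) = μₙ - μₙ₋₁ + ⋯` by `⌈(n + 1) μₙ / n⌉ - a(μ)` and `|μ|` by `|μ| + 2 a(μ) - ⌈(n + 1) μₙ / n⌉`.
Hence `|λ| = k + |μ'| + 2 a(μ')` and `a(λ) = k + a(μ')`, and recursing on `μ'` gives a bijection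
from lecture hall partitions of length `n` onto `ℕⁿ` carrying `|λ|` to `∑ᵢ (2i + 1) cᵢ`
(`0`-based) and `a(λ)` to `∑ᵢ cᵢ`. The generating function of the weight `∑ᵢ (2i + 1) cᵢ` on `ℕⁿ`
is `∏ᵢ 1 / (1 - x^(2i+1))`.
-/

open Finset

namespace LectureHall

theorem mul_div_succ_add_ceilDiv_succ (b x : ℕ) : b * x / (b + 1) + x ⌈/⌉ (b + 1) = x := by
  have hb : 0 < b + 1 := b.succ_pos
  set c := x ⌈/⌉ (b + 1)
  have hc₁ : x ≤ (b + 1) * c := (ceilDiv_le_iff_le_mul hb).1 le_rfl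
  have hc₂ : (b + 1) * c < x + (b + 1) := by
    rw [show c = (x + b) / (b + 1) from Nat.ceilDiv_eq_add_pred_div x (b + 1)]
    have := Nat.div_mul_le_self (x + b) (b + 1)
    rw [mul_comm]; omega
  have hcx : c ≤ x := by nlinarith
  rw [Nat.div_eq_of_lt_le (k := x - c)]
  · omega
  · zify [hcx]; nlinarith
  · zify [hcx]; nlinarith

theorem add_two_mul_ceilDiv_add_mul_div (b x : ℕ) :
    (b + 2) * x ⌈/⌉ (b + 1) + b * x / (b + 1) = 2 * x := by
  have hshift : (b + 2) * x ⌈/⌉ (b + 1) = x + x ⌈/⌉ (b + 1) := by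
    simp only [Nat.ceilDiv_eq_add_pred_div, Nat.add_succ_sub_one]
    rw [show (b + 2) * x + b = x + b + x * (b + 1) by ring, Nat.add_mul_div_right _ _ b.succ_pos]
    ring
  have := mul_div_succ_add_ceilDiv_succ b x
  omega

def extend {m : ℕ} (μ : Fin m → ℕ) (p : ℕ) : ℕ := if h : p < m then μ ⟨p, h⟩ else 0

theorem extend_of_lt {m : ℕ} (μ : Fin m → ℕ) {p : ℕ} (hp : p < m) : extend μ p = μ ⟨p, hp⟩ :=
  dif_pos hp

@[simp]
theorem extend_val {m : ℕ} (μ : Fin m → ℕ) (i : Fin m) : extend μ i = μ i := extend_of_lt μ i.isLt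

theorem extend_snoc {m : ℕ} (μ : Fin m → ℕ) (t p : ℕ) :
    extend (Fin.snoc μ t : Fin (m + 1) → ℕ) p = if p = m then t else extend μ p := by
  unfold extend
  split_ifs with h₁ h₂ h₃ <;> try omega
  · subst h₂; exact Fin.snoc_last (α := fun _ => ℕ) _ _
  · exact Fin.snoc_castSucc (α := fun _ => ℕ) (i := ⟨p, h₃⟩) _ _

/-- The lecture hall condition `λᵢ / i ≤ λᵢ₊₁ / (i + 1)`, cleared of denominators and written
with `0`-based indices. -/
def IsLectureHall {n : ℕ} (l : Fin n → ℕ) : Prop :=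
  ∀ p, p + 1 < n → (p + 2) * extend l p ≤ (p + 1) * extend l (p + 1)

theorem isLectureHall_fin_zero (l : Fin 0 → ℕ) : IsLectureHall l := fun _ hp =>
  absurd hp (by omega)

theorem isLectureHall_iff_monotone {n : ℕ} (l : Fin n → ℕ) :
    IsLectureHall l ↔ Monotone fun i : Fin n => (l i : ℚ) / ((i : ℕ) + 1) := by
  cases n with
  | zero => exact iff_of_true (isLectureHall_fin_zero l) (Subsingleton.monotone _)
  | succ k =>
    simp only [IsLectureHall, Fin.monotone_iff_le_succ, Fin.forall_iff, Fin.castSucc_mk,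
      Fin.succ_mk, Nat.add_lt_add_iff_right]
    refine forall₂_congr fun p hp => ?_
    rw [extend_of_lt l (by omega), extend_of_lt l (by omega),
      div_le_div_iff₀ (by positivity) (by positivity), ← Nat.cast_le (α := ℚ)]
    push_cast
    constructor <;> intro h <;> linarith

/-- `[lo f p, hi f p]` is the set of values allowed at position `p` by the lecture hall
inequalities with the neighbours `f (p - 1)` and `f (p + 1)`; `lo f 0 = 0` since `⌈/⌉ 0` is `0`. -/
def lo (f : ℕ → ℕ) (p : ℕ) : ℕ := (p + 1) * f (p - 1) ⌈/⌉ p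

def hi (f : ℕ → ℕ) (p : ℕ) : ℕ := (p + 1) * f (p + 1) / (p + 2)

theorem lo_le_iff (f : ℕ → ℕ) {p : ℕ} (hp : 0 < p) (v : ℕ) :
    lo f p ≤ v ↔ (p + 1) * f (p - 1) ≤ p * v :=
  ceilDiv_le_iff_le_mul hp

theorem le_hi_iff (f : ℕ → ℕ) (p v : ℕ) : v ≤ hi f p ↔ (p + 2) * v ≤ (p + 1) * f (p + 1) := by
  rw [hi, Nat.le_div_iff_mul_le (by omega), mul_comm]

theorem lo_zero (f : ℕ → ℕ) : lo f 0 = 0 := ceilDiv_zero _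

theorem lo_add_two_add_hi (f : ℕ → ℕ) (p : ℕ) : lo f (p + 2) + hi f p = 2 * f (p + 1) :=
  add_two_mul_ceilDiv_add_mul_div (p + 1) (f (p + 1))

/-- Every adjacent pair of positions contains exactly one `p ≡ m (mod 2)`, and such a `p` is
never the last position. -/
theorem isLectureHall_iff_mem_Icc {m : ℕ} (μ : Fin m → ℕ) :
    IsLectureHall μ ↔ ∀ i : Fin m, (i : ℕ) % 2 = m % 2 →
      μ i ∈ Icc (lo (extend μ) i) (hi (extend μ) i) := by
  simp only [mem_Icc]
  constructor
  · intro h i hpar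
    rw [← extend_val μ i]
    refine ⟨?_, (le_hi_iff _ _ _).2 (h i (by omega))⟩
    rcases Nat.eq_zero_or_pos (i : ℕ) with h₀ | h₀
    · simp [h₀, lo_zero]
    · rw [lo_le_iff _ h₀]
      have := h (i - 1) (by omega)
      rwa [Nat.sub_add_cancel h₀, show (i : ℕ) - 1 + 2 = i + 1 by omega] at this
  · intro h p hp
    by_cases hpar : p % 2 = m % 2
    · have := (le_hi_iff _ _ _).1 (h ⟨p, by omega⟩ hpar).2
      rwa [← extend_val μ ⟨p, _⟩] at this
    · have := (lo_le_iff _ (by omega : 0 < p + 1) _).1 (h ⟨p + 1, hp⟩ (by simp; omega)).1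
      rwa [← extend_val μ ⟨p + 1, hp⟩, Nat.add_sub_cancel] at this

def reflect {m : ℕ} (μ : Fin m → ℕ) : Fin m → ℕ := fun i =>
  if (i : ℕ) % 2 = m % 2 then lo (extend μ) i + hi (extend μ) i - μ i else μ i

section reflect

variable {m : ℕ} (μ : Fin m → ℕ)

theorem extend_reflect_of_mod_ne {p : ℕ} (hp : p % 2 ≠ m % 2) :
    extend (reflect μ) p = extend μ p := by
  unfold extend reflect
  split_ifs <;> rfl

theorem lo_reflect {p : ℕ} (hp : p % 2 = m % 2) : lo (extend (reflect μ)) p = lo (extend μ) p := by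
  rcases Nat.eq_zero_or_pos p with rfl | hp₀
  · simp only [lo_zero]
  · rw [lo, lo, extend_reflect_of_mod_ne μ (by omega)]

theorem hi_reflect {p : ℕ} (hp : p % 2 = m % 2) : hi (extend (reflect μ)) p = hi (extend μ) p := by
  rw [hi, hi, extend_reflect_of_mod_ne μ (by omega)]

theorem reflect_apply_of_mod_eq {i : Fin m} (hpar : (i : ℕ) % 2 = m % 2) :
    reflect μ i = lo (extend μ) i + hi (extend μ) i - μ i := if_pos hpar

theorem reflect_apply_of_mod_ne {i : Fin m} (hpar : (i : ℕ) % 2 ≠ m % 2) : reflect μ i = μ i :=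
  if_neg hpar

variable {μ}

theorem isLectureHall_reflect (h : IsLectureHall μ) : IsLectureHall (reflect μ) := by
  rw [isLectureHall_iff_mem_Icc] at h ⊢
  intro i hpar
  have := mem_Icc.1 (h i hpar)
  rw [lo_reflect μ hpar, hi_reflect μ hpar, reflect_apply_of_mod_eq μ hpar, mem_Icc]
  omega

theorem reflect_reflect (h : IsLectureHall μ) : reflect (reflect μ) = μ := by
  rw [isLectureHall_iff_mem_Icc] at h
  funext i
  by_cases hpar : (i : ℕ) % 2 = m % 2
  · have := mem_Icc.1 (h i hpar)
    rw [reflect_apply_of_mod_eq _ hpar, lo_reflect μ hpar, hi_reflect μ hpar,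
      reflect_apply_of_mod_eq _ hpar]
    omega
  · rw [reflect_apply_of_mod_ne _ hpar, reflect_apply_of_mod_ne _ hpar]

end reflect

def reflectPerm (m : ℕ) : Equiv.Perm {μ : Fin m → ℕ // IsLectureHall μ} :=
  Function.Involutive.toPerm (fun μ => ⟨reflect μ.1, isLectureHall_reflect μ.2⟩)
    fun μ => Subtype.ext (reflect_reflect μ.2)

def altSum {n : ℕ} (l : Fin n → ℕ) : ℤ := ∑ i : Fin n, (-1) ^ (n - 1 - (i : ℕ)) * l i

/-- The least `t` such that `Fin.snoc μ t` is lecture hall. -/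
def minNext {m : ℕ} (μ : Fin m → ℕ) : ℕ := lo (extend μ) m

theorem altSum_eq_sum_sub {n : ℕ} (l : Fin n → ℕ) :
    altSum l = ∑ i, (l i : ℤ) - 2 * ∑ i : Fin n, if (i : ℕ) % 2 = n % 2 then (l i : ℤ) else 0 := by
  rw [altSum, mul_sum, ← sum_sub_distrib]
  refine sum_congr rfl fun i _ => ?_
  have := i.isLt
  split_ifs with hpar
  · rw [Odd.neg_one_pow (Nat.odd_iff.2 (by omega))]; ring
  · rw [Even.neg_one_pow (Nat.even_iff.2 (by omega))]; ring

/-- The sum telescopes: a position `q ≢ m (mod 2)` receives `lo f (q + 1)` and, if `0 < q`,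
`hi f (q - 1)`, which add up to `2 * f q` (by `lo_add_two_add_hi`, and `lo f 1 = 2 * f 0`). -/
theorem sum_lo_add_hi_add_lo (f : ℕ → ℕ) : ∀ m : ℕ,
    ∑ p ∈ range m, (if p % 2 = m % 2 then lo f p + hi f p else 0) + lo f m =
      2 * ∑ p ∈ range m, if p % 2 = m % 2 then 0 else f p
  | 0 => by simp [lo_zero]
  | 1 => by simp [lo]
  | m + 2 => by
    have ih := sum_lo_add_hi_add_lo f m
    have hpair := lo_add_two_add_hi f m
    simp only [sum_range_succ, Nat.add_mod_right, if_pos, show (m + 1) % 2 ≠ m % 2 by omega,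
      if_false] at ih ⊢
    omega

theorem sum_lo_add_hi_add_minNext {m : ℕ} (μ : Fin m → ℕ) :
    ∑ i : Fin m, (if (i : ℕ) % 2 = m % 2 then (lo (extend μ) i + hi (extend μ) i : ℤ) else 0) +
        minNext μ =
      2 * (∑ i, (μ i : ℤ) - ∑ i : Fin m, if (i : ℕ) % 2 = m % 2 then (μ i : ℤ) else 0) := by
  have key := congrArg (Nat.cast : ℕ → ℤ) (sum_lo_add_hi_add_lo (extend μ) m)
  rw [← sum_sub_distrib]
  push_cast [← Fin.sum_univ_eq_sum_range, apply_ite (Nat.cast : ℕ → ℤ)] at key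
  rw [minNext, key]
  congr 1
  refine sum_congr rfl fun i _ => ?_
  split_ifs <;> simp

theorem sum_reflect_and_altSum_reflect {m : ℕ} {μ : Fin m → ℕ} (h : IsLectureHall μ) :
    ∑ i, (reflect μ i : ℤ) = ∑ i, (μ i : ℤ) + 2 * altSum μ - minNext μ ∧
      altSum (reflect μ) = minNext μ - altSum μ := by
  rw [isLectureHall_iff_mem_Icc] at h
  set K : ℤ := ∑ i : Fin m,
    if (i : ℕ) % 2 = m % 2 then (lo (extend μ) i + hi (extend μ) i : ℤ) else 0
  have hcast (i : Fin m) (hpar : (i : ℕ) % 2 = m % 2) :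
      (reflect μ i : ℤ) = lo (extend μ) i + hi (extend μ) i - μ i := by
    have := mem_Icc.1 (h i hpar)
    rw [reflect_apply_of_mod_eq μ hpar, Nat.cast_sub (by omega), Nat.cast_add]
  have hsum : ∑ i, (reflect μ i : ℤ) =
      ∑ i, (μ i : ℤ) + K - 2 * ∑ i : Fin m, if (i : ℕ) % 2 = m % 2 then (μ i : ℤ) else 0 := by
    rw [mul_sum, ← sum_add_distrib, ← sum_sub_distrib]
    refine sum_congr rfl fun i _ => ?_
    split_ifs with hpar
    · rw [hcast i hpar]; ring
    · rw [reflect_apply_of_mod_ne μ hpar]; ring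
  have hsumR : ∑ i : Fin m, (if (i : ℕ) % 2 = m % 2 then (reflect μ i : ℤ) else 0) =
      K - ∑ i : Fin m, if (i : ℕ) % 2 = m % 2 then (μ i : ℤ) else 0 := by
    rw [← sum_sub_distrib]
    refine sum_congr rfl fun i _ => ?_
    split_ifs with hpar
    · exact hcast i hpar
    · simp
  have hK := sum_lo_add_hi_add_minNext μ
  rw [altSum_eq_sum_sub, altSum_eq_sum_sub, hsum, hsumR]
  constructor <;> linarith

theorem isLectureHall_snoc_iff {m : ℕ} (μ : Fin m → ℕ) (t : ℕ) :
    IsLectureHall (Fin.snoc μ t : Fin (m + 1) → ℕ) ↔ IsLectureHall μ ∧ minNext μ ≤ t := by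
  simp only [IsLectureHall, extend_snoc]
  constructor
  · intro h
    refine ⟨fun p hp => ?_, ?_⟩
    · simpa [show p ≠ m by omega, show p + 1 ≠ m by omega] using h p (by omega)
    · rcases Nat.eq_zero_or_pos m with rfl | hm
      · simp [minNext, lo_zero]
      · rw [minNext, lo_le_iff _ hm]
        simpa [show m - 1 ≠ m by omega, Nat.sub_add_cancel hm, show m - 1 + 2 = m + 1 by omega]
          using h (m - 1) (by omega)
  · rintro ⟨h, ht⟩ p hp
    by_cases hpm : p + 1 = m
    · subst hpm
      simpa using (lo_le_iff _ p.succ_pos _).1 ht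
    · simpa [show p ≠ m by omega, hpm] using h p (by omega)

theorem isLectureHall_iff_init {m : ℕ} (l : Fin (m + 1) → ℕ) :
    IsLectureHall l ↔ IsLectureHall (Fin.init l) ∧ minNext (Fin.init l) ≤ l (Fin.last m) := by
  conv_lhs => rw [← Fin.snoc_init_self l]
  exact isLectureHall_snoc_iff _ _

def splitLast (m : ℕ) :
    {l : Fin (m + 1) → ℕ // IsLectureHall l} ≃ ℕ × {μ : Fin m → ℕ // IsLectureHall μ} where
  toFun l := (l.1 (Fin.last m) - minNext (Fin.init l.1),
    ⟨Fin.init l.1, ((isLectureHall_iff_init l.1).1 l.2).1⟩)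
  invFun kμ := ⟨Fin.snoc kμ.2.1 (minNext kμ.2.1 + kμ.1),
    (isLectureHall_snoc_iff _ _).2 ⟨kμ.2.2, Nat.le_add_right _ _⟩⟩
  left_inv l := by
    have := ((isLectureHall_iff_init l.1).1 l.2).2
    ext1
    simp only [Nat.add_sub_cancel' this, Fin.snoc_init_self]
  right_inv kμ := by
    ext <;> simp

def lectureHallEquiv : (n : ℕ) → {l : Fin n → ℕ // IsLectureHall l} ≃ (Fin n → ℕ)
  | 0 => Equiv.subtypeUnivEquiv isLectureHall_fin_zero
  | n + 1 => (splitLast n).trans <|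
      ((Equiv.refl ℕ).prodCongr ((reflectPerm n).trans (lectureHallEquiv n))).trans
        (Fin.consEquiv fun _ => ℕ)

theorem altSum_eq_last_sub {m : ℕ} (l : Fin (m + 1) → ℕ) :
    altSum l = l (Fin.last m) - altSum (Fin.init l) := by
  simp only [altSum, Fin.sum_univ_castSucc, Fin.val_castSucc, Fin.val_last, Nat.add_sub_cancel,
    Nat.sub_self, pow_zero, one_mul, Fin.init]
  rw [add_comm, sub_eq_add_neg, ← sum_neg_distrib]
  congr 1
  refine sum_congr rfl fun i _ => ?_
  rw [show m - (i : ℕ) = m - 1 - i + 1 by omega, pow_succ]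
  ring

theorem lectureHallEquiv_succ_apply {n : ℕ} (l : {l : Fin (n + 1) → ℕ // IsLectureHall l}) :
    lectureHallEquiv (n + 1) l = Fin.cons (l.1 (Fin.last n) - minNext (Fin.init l.1))
      (lectureHallEquiv n ⟨reflect (Fin.init l.1),
        isLectureHall_reflect ((isLectureHall_iff_init l.1).1 l.2).1⟩) :=
  rfl

theorem altSum_eq_sum_lectureHallEquiv :
    ∀ (n : ℕ) (l : {l : Fin n → ℕ // IsLectureHall l}),
      altSum l.1 = ∑ i, (lectureHallEquiv n l i : ℤ)
  | 0, l => by simp [altSum]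
  | n + 1, l => by
    obtain ⟨hinit, hlast⟩ := (isLectureHall_iff_init l.1).1 l.2
    rw [lectureHallEquiv_succ_apply, Fin.sum_univ_succ]
    simp only [Fin.cons_zero, Fin.cons_succ]
    rw [← altSum_eq_sum_lectureHallEquiv n,
      (sum_reflect_and_altSum_reflect hinit).2, altSum_eq_last_sub]
    push_cast [hlast]
    ring

theorem sum_cons_mul_two_mul_add_one {n : ℕ} (k : ℕ) (a : Fin n → ℕ) :
    ∑ i, (Fin.cons k a : Fin (n + 1) → ℕ) i * (2 * (i : ℕ) + 1) =
      k + ∑ i, a i * (2 * (i : ℕ) + 1) + 2 * ∑ i, a i := by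
  simp only [Fin.sum_univ_succ, Fin.cons_zero, Fin.cons_succ, Fin.val_zero, Fin.val_succ, mul_sum]
  rw [mul_zero, zero_add, mul_one, add_assoc, ← sum_add_distrib]
  exact congrArg (k + ·) (sum_congr rfl fun i _ => by ring)

theorem sum_eq_sum_lectureHallEquiv :
    ∀ (n : ℕ) (l : {l : Fin n → ℕ // IsLectureHall l}),
      ∑ i, l.1 i = ∑ i, lectureHallEquiv n l i * (2 * (i : ℕ) + 1)
  | 0, l => by simp
  | n + 1, l => by
    obtain ⟨hinit, hlast⟩ := (isLectureHall_iff_init l.1).1 l.2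
    obtain ⟨hsum, halt⟩ := sum_reflect_and_altSum_reflect hinit
    set μ : {μ : Fin n → ℕ // IsLectureHall μ} :=
      ⟨reflect (Fin.init l.1), isLectureHall_reflect hinit⟩
    have ih := sum_eq_sum_lectureHallEquiv n μ
    have hμ := altSum_eq_sum_lectureHallEquiv n μ
    rw [lectureHallEquiv_succ_apply, sum_cons_mul_two_mul_add_one, Fin.sum_univ_castSucc, ← ih]
    zify [hlast]
    rw [← hμ, halt]
    simp only [Fin.init] at hsum ⊢
    linarith

section weightedCompositions

open PowerSeries

variable (w : ℕ → ℕ)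

def weightedSum {n : ℕ} (a : Fin n → ℕ) : ℕ := ∑ i, a i * w i

theorem weightedSum_snoc {n : ℕ} (a : Fin n → ℕ) (t : ℕ) :
    weightedSum w (Fin.snoc a t : Fin (n + 1) → ℕ) = weightedSum w a + t * w n := by
  simp [weightedSum, Fin.sum_univ_castSucc]

variable {w}

theorem finite_weightedSum_eq (hw : ∀ i, 0 < w i) (n m : ℕ) :
    Finite {a : Fin n → ℕ // weightedSum w a = m} := by
  refine Set.Finite.to_subtype ((Set.Finite.pi' fun (_ : Fin n) => Set.finite_Iic m).subset ?_)
  rintro a rfl i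
  exact (Nat.le_mul_of_pos_right _ (hw i)).trans
    (single_le_sum (f := fun j => a j * w j) (fun _ _ => Nat.zero_le _) (mem_univ i))

def prodNatEquivSum {X : Type*} (F : X → ℕ) (k m : ℕ) :
    {p : ℕ × X // F p.2 + p.1 * k = m} ≃
      {x // F x = m} ⊕ {p : ℕ × X // F p.2 + p.1 * k + k = m} where
  toFun
    | ⟨(0, x), h⟩ => .inl ⟨x, by simpa using h⟩
    | ⟨(t + 1, x), h⟩ => .inr ⟨(t, x), by rw [← h]; ring⟩
  invFun
    | .inl ⟨x, h⟩ => ⟨(0, x), by simpa using h⟩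
    | .inr ⟨(t, x), h⟩ => ⟨(t + 1, x), by rw [← h]; ring⟩
  left_inv := by rintro ⟨⟨_ | t, x⟩, h⟩ <;> rfl
  right_inv := by rintro (⟨x, h⟩ | ⟨⟨t, x⟩, h⟩) <;> rfl

def snocWeightedSumEquiv (n : ℕ) (P : ℕ → Prop) :
    {p : ℕ × (Fin n → ℕ) // P (weightedSum w p.2 + p.1 * w n)} ≃
      {a : Fin (n + 1) → ℕ // P (weightedSum w a)} :=
  (Fin.snocEquiv fun _ => ℕ).subtypeEquiv fun p => by
    rw [← weightedSum_snoc]; rfl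

theorem card_weightedSum_eq_succ (hw : ∀ i, 0 < w i) (n m : ℕ) :
    Nat.card {a : Fin (n + 1) → ℕ // weightedSum w a = m} =
      Nat.card {a : Fin n → ℕ // weightedSum w a = m} +
        Nat.card {a : Fin (n + 1) → ℕ // weightedSum w a + w n = m} := by
  let e := (snocWeightedSumEquiv n (· = m)).symm.trans (prodNatEquivSum (weightedSum w) (w n) m)
  have := finite_weightedSum_eq hw (n + 1) m
  have := Finite.of_equiv _ e
  have := finite_weightedSum_eq hw n m
  have : Finite {p : ℕ × (Fin n → ℕ) // weightedSum w p.2 + p.1 * w n + w n = m} :=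
    Finite.sum_right {a : Fin n → ℕ // weightedSum w a = m}
  rw [Nat.card_congr e, Nat.card_sum, Nat.card_congr (snocWeightedSumEquiv n (· + w n = m))]

theorem card_add_eq_ite {X : Type*} (F : X → ℕ) (k m : ℕ) :
    Nat.card {x // F x + k = m} = if k ≤ m then Nat.card {x // F x = m - k} else 0 := by
  split_ifs with hk
  · exact Nat.card_congr (Equiv.subtypeEquivRight fun x => by omega)
  · have : IsEmpty {x // F x + k = m} := ⟨fun x => by omega⟩
    exact Nat.card_of_isEmpty

theorem card_weightedSum_fin_zero (m : ℕ) :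
    Nat.card {a : Fin 0 → ℕ // weightedSum w a = m} = if m = 0 then 1 else 0 := by
  simp only [weightedSum, univ_eq_empty, sum_empty]
  split_ifs with hm
  · subst hm; simp
  · have : IsEmpty {a : Fin 0 → ℕ // 0 = m} := ⟨fun a => hm a.2.symm⟩
    exact Nat.card_of_isEmpty

theorem mk_card_weightedSum_eq_prod {K : Type*} [Field K] (hw : ∀ i, 0 < w i) (n : ℕ) :
    PowerSeries.mk (fun m => (Nat.card {a : Fin n → ℕ // weightedSum w a = m} : K)) =
      ∏ i ∈ range n, (1 - X ^ w i)⁻¹ := by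
  induction n with
  | zero =>
    ext m
    rw [coeff_mk, card_weightedSum_fin_zero, range_zero, prod_empty, coeff_one]
    split_ifs <;> simp
  | succ n ih =>
    rw [prod_range_succ, ← ih, PowerSeries.eq_mul_inv_iff_mul_eq (by simp [(hw n).ne'])]
    ext m
    rw [mul_sub, mul_one, map_sub, coeff_mul_X_pow', coeff_mk, coeff_mk,
      card_weightedSum_eq_succ hw, card_add_eq_ite]
    split_ifs <;> simp

end weightedCompositions

theorem card_isLectureHall_sum_eq (n m : ℕ) :
    Nat.card {l : Fin n → ℕ // IsLectureHall l ∧ ∑ i, l i = m} =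
      Nat.card {a : Fin n → ℕ // weightedSum (fun i => 2 * i + 1) a = m} :=
  Nat.card_congr <| (Equiv.subtypeSubtypeEquivSubtypeInter _ (fun l => ∑ i, l i = m)).symm.trans <|
    Equiv.subtypeEquiv (lectureHallEquiv n) fun l => by rw [sum_eq_sum_lectureHallEquiv]; rfl

end LectureHall

theorem lecture_hall_generating_function_general (n : ℕ) :
    PowerSeries.mk (fun m : ℕ =>
        (Nat.card {l : Fin n → ℕ //
          (∀ i j : Fin n, i ≤ j → (l i : ℚ) / ((i : ℕ) + 1) ≤ (l j : ℚ) / ((j : ℕ) + 1)) ∧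
          ∑ i, l i = m} : ℚ)) =
    ∏ i ∈ Finset.range n, (1 - (PowerSeries.X : PowerSeries ℚ) ^ (2 * i + 1))⁻¹ := by
  rw [← LectureHall.mk_card_weightedSum_eq_prod (fun i => (2 * i).succ_pos) n]
  congr with m
  rw [← LectureHall.card_isLectureHall_sum_eq]
  exact congrArg _ <| Nat.card_congr <| Equiv.subtypeEquivRight fun l =>
    and_congr_left' (LectureHall.isLectureHall_iff_monotone l).symm

/-- Lecture hall generating function: for `n ≥ 1`, the power series
whose `m`-th coefficient counts lecture hall partitions of length `n` with sum `m`
equals `∏_{i=1}^{n} 1/(1 - x^{2i-1})`. -/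
theorem lecture_hall_generating_function (n : ℕ) (hn : 1 ≤ n) :
    PowerSeries.mk (fun m : ℕ =>
        (Nat.card {l : Fin n → ℕ //
          (∀ i j : Fin n, i ≤ j → (l i : ℚ) / ((i : ℕ) + 1) ≤ (l j : ℚ) / ((j : ℕ) + 1)) ∧
          ∑ i, l i = m} : ℚ)) =
    ∏ i ∈ Finset.range n, (1 - (PowerSeries.X : PowerSeries ℚ) ^ (2 * i + 1))⁻¹ :=
  lecture_hall_generating_function_general n
end

section
/- (Euler's theorem as a limit of lecture hall) The number of partitions of m into distinct parts equals the number of partitions of m into odd parts, and moreover both equal the number of lecture hall partitions of length n with sum m for any n ≥ m. -/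
/-!
Euler's theorem itself is `Nat.Partition.card_odds_eq_card_distincts`. On the lecture hall
side, if `l` has sum at most `n` and the nonzero entries of `l` strictly increase, then an entry
`l i ≠ 0` is followed by `n - 1 - i` larger entries, so `l i ≤ i + 1`; together with
`l j ≥ l i + (j - i)` this gives `l i / (i + 1) ≤ l j / (j + 1)`. Conversely the lecture hall
inequality forces nonzero entries to strictly increase. Hence lecture hall sequences of sum
`m ≤ n` are exactly the partitions of `m` into distinct parts, sorted and padded with zeros.
-/

open Finset Nat.Partition

theorem card_le_sum_of_zero_notMem {s : Finset ℕ} (hs : 0 ∉ s) : s.card ≤ ∑ x ∈ s, x := by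
  simpa using card_nsmul_le_sum s id 1 fun x hx => Nat.one_le_iff_ne_zero.2 fun h => hs (h ▸ hx)

section

variable {n : ℕ}

def IsLectureHall (l : Fin n → ℕ) : Prop :=
  ∀ i j : Fin n, i ≤ j → (l i : ℚ) / ((i : ℕ) + 1) ≤ (l j : ℚ) / ((j : ℕ) + 1)

/-- `l = (0, …, 0, a₁, …, a_k)` with `0 < a₁ < ⋯ < a_k`. -/
def IsPaddedDistinct (l : Fin n → ℕ) : Prop :=
  ∀ ⦃i j : Fin n⦄, i < j → l i ≠ 0 → l i < l j

theorem IsLectureHall.isPaddedDistinct {l : Fin n → ℕ} (hl : IsLectureHall l) :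
    IsPaddedDistinct l := by
  intro i j hij hi
  have hcross : l i * ((j : ℕ) + 1) ≤ l j * ((i : ℕ) + 1) := by
    have := hl i j hij.le
    rw [div_le_div_iff₀ (by positivity) (by positivity)] at this
    exact_mod_cast this
  have hij' : (i : ℕ) < j := hij
  by_contra! hji
  nlinarith [Nat.mul_le_mul_right ((i : ℕ) + 1) hji, Nat.pos_of_ne_zero hi]

theorem IsPaddedDistinct.strictMonoOn_Ici {l : Fin n → ℕ} (hl : IsPaddedDistinct l) {i : Fin n}
    (hi : l i ≠ 0) : StrictMonoOn l (Set.Ici i) := by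
  intro a ha b _ hab
  refine hl hab ?_
  rcases (Set.mem_Ici.1 ha).eq_or_lt with rfl | hia
  · exact hi
  · exact (Nat.zero_le _).trans_lt (hl hia hi) |>.ne'

theorem IsPaddedDistinct.add_sub_le {l : Fin n → ℕ} (hl : IsPaddedDistinct l) {i j : Fin n}
    (hi : l i ≠ 0) (hij : i ≤ j) : l i + (j - i : ℕ) ≤ l j := by
  have hmono := hl.strictMonoOn_Ici hi
  have hcard := card_le_card_of_injOn l (s := Icc i j) (t := Icc (l i) (l j))
    (fun k hk => by
      obtain ⟨hik, hkj⟩ := mem_Icc.1 hk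
      exact mem_Icc.2 ⟨hmono.monotoneOn Set.self_mem_Ici hik hik, hmono.monotoneOn hik hij hkj⟩)
    (hmono.injOn.mono fun k hk => (mem_Icc.1 hk).1)
  rw [Fin.card_Icc, Nat.card_Icc] at hcard
  have : (i : ℕ) ≤ j := hij
  omega

theorem IsPaddedDistinct.le_succ {l : Fin n → ℕ} (hl : IsPaddedDistinct l)
    (hsum : ∑ i, l i ≤ n) (i : Fin n) : l i ≤ i + 1 := by
  by_cases hi : l i = 0
  · omega
  have hin := i.isLt
  let top : Fin n := ⟨n - 1, by omega⟩
  have hgap := hl.add_sub_le hi (j := top) (Fin.le_def.2 (by simp [top]; omega))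
  have := single_le_sum (fun k _ => Nat.zero_le (l k)) (mem_univ top)
  have htop : (top : ℕ) = n - 1 := rfl
  omega

theorem IsPaddedDistinct.isLectureHall {l : Fin n → ℕ} (hl : IsPaddedDistinct l)
    (hsum : ∑ i, l i ≤ n) : IsLectureHall l := by
  intro i j hij
  by_cases hi : l i = 0
  · rw [hi, Nat.cast_zero, zero_div]
    positivity
  rw [div_le_div_iff₀ (by positivity) (by positivity)]
  have hgap := hl.add_sub_le hi hij
  have hsmall := hl.le_succ hsum i
  obtain ⟨d, hd⟩ := Nat.exists_eq_add_of_le (Fin.le_def.1 hij)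
  rw [hd, Nat.add_sub_cancel_left] at hgap
  rw [hd]
  push_cast
  exact_mod_cast (by nlinarith : l i * (i + d + 1) ≤ l j * (i + 1))

theorem isLectureHall_iff_isPaddedDistinct {l : Fin n → ℕ} (hsum : ∑ i, l i ≤ n) :
    IsLectureHall l ↔ IsPaddedDistinct l :=
  ⟨IsLectureHall.isPaddedDistinct, fun hl => hl.isLectureHall hsum⟩

def nonzeroValues (l : Fin n → ℕ) : Finset ℕ := (univ.image l).erase 0

/-- The elements of `s` in increasing order, right-aligned and padded with zeros on the left
(only the `n` largest elements are kept if `n < s.card`). -/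
def padSort : (n : ℕ) → Finset ℕ → Fin n → ℕ
  | 0, _ => Fin.elim0
  | n + 1, s => Fin.snoc (padSort n (s.erase (s.sup id))) (s.sup id)

theorem mem_nonzeroValues {l : Fin n → ℕ} {x : ℕ} :
    x ∈ nonzeroValues l ↔ x ≠ 0 ∧ ∃ i, l i = x := by
  simp [nonzeroValues]

theorem zero_notMem_nonzeroValues (l : Fin n → ℕ) : 0 ∉ nonzeroValues l :=
  notMem_erase 0 _

theorem nonzeroValues_snoc (l : Fin n → ℕ) (a : ℕ) :
    nonzeroValues (Fin.snoc l a : Fin (n + 1) → ℕ) = (insert a (nonzeroValues l)).erase 0 := by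
  ext x
  simp only [mem_nonzeroValues, mem_erase, mem_insert, Fin.exists_fin_succ', Fin.snoc_castSucc,
    Fin.snoc_last]
  tauto

theorem isPaddedDistinct_snoc_iff {l : Fin n → ℕ} {a : ℕ} :
    IsPaddedDistinct (Fin.snoc l a : Fin (n + 1) → ℕ) ↔
      IsPaddedDistinct l ∧ ∀ x ∈ nonzeroValues l, x < a := by
  simp only [IsPaddedDistinct, Fin.forall_fin_succ', Fin.castSucc_lt_castSucc_iff,
    Fin.snoc_castSucc, Fin.snoc_last, Fin.castSucc_lt_last, lt_irrefl, mem_nonzeroValues]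
  have hlast (i : Fin n) : ¬ Fin.last n < i.castSucc := (Fin.castSucc_lt_last i).not_gt
  constructor
  · rintro ⟨h, -, -⟩
    exact ⟨fun i j => (h i).1 j, by rintro x ⟨hx, i, rfl⟩; exact (h i).2 trivial hx⟩
  · rintro ⟨h, ha⟩
    exact ⟨fun i => ⟨fun j => @h i j, fun _ hi => ha _ ⟨hi, i, rfl⟩⟩,
      fun i hi => absurd hi (hlast i), fun h => h.elim⟩

theorem sum_nonzeroValues {l : Fin n → ℕ} (hl : IsPaddedDistinct l) :
    ∑ x ∈ nonzeroValues l, x = ∑ i, l i := by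
  induction l using Fin.snocInduction with
  | elim0 => simp [nonzeroValues]
  | snoc l a ih =>
    obtain ⟨hl, hlt⟩ := isPaddedDistinct_snoc_iff.1 hl
    rw [Fin.sum_univ_castSucc]
    simp only [Fin.snoc_castSucc, Fin.snoc_last]
    rw [← ih hl, nonzeroValues_snoc]
    rcases eq_or_ne a 0 with rfl | ha
    · rw [erase_insert_eq_erase, erase_eq_of_notMem (zero_notMem_nonzeroValues l), add_zero]
    · rw [erase_eq_of_notMem (by simp [ha.symm, zero_notMem_nonzeroValues]),
        sum_insert fun h => (hlt a h).false, add_comm]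

theorem padSort_nonzeroValues {l : Fin n → ℕ} (hl : IsPaddedDistinct l) :
    padSort n (nonzeroValues l) = l := by
  induction l using Fin.snocInduction with
  | elim0 => funext i; exact i.elim0
  | snoc l a ih =>
    obtain ⟨hl, hlt⟩ := isPaddedDistinct_snoc_iff.1 hl
    suffices (nonzeroValues (Fin.snoc l a : Fin (_ + 1) → ℕ)).sup id = a ∧
        (nonzeroValues (Fin.snoc l a : Fin (_ + 1) → ℕ)).erase a = nonzeroValues l by
      rw [padSort, this.1, this.2, ih hl]
    rw [nonzeroValues_snoc]
    rcases eq_or_ne a 0 with rfl | ha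
    · have hempty : nonzeroValues l = ∅ :=
        eq_empty_of_forall_notMem fun x hx => (hlt x hx).not_ge x.zero_le
      simp [hempty]
    · rw [erase_eq_of_notMem (by simp [ha.symm, zero_notMem_nonzeroValues]), sup_insert,
        erase_insert fun h => (hlt a h).false]
      exact ⟨sup_eq_left.2 (Finset.sup_le fun x hx => (hlt x hx).le), rfl⟩

theorem nonzeroValues_padSort_subset (n : ℕ) (s : Finset ℕ) :
    nonzeroValues (padSort n s) ⊆ s := by
  induction n generalizing s with
  | zero => simp [nonzeroValues]
  | succ n ih =>
    intro x hx
    rw [padSort, nonzeroValues_snoc, mem_erase, mem_insert] at hx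
    obtain ⟨hx0, rfl | hx⟩ := hx
    · have hne : s.Nonempty := nonempty_iff_ne_empty.2 fun h => by simp [h] at hx0
      obtain ⟨y, hy, hxy⟩ := exists_mem_eq_sup s hne id
      exact hxy ▸ hy
    · exact mem_of_mem_erase (ih _ hx)

theorem isPaddedDistinct_padSort (n : ℕ) (s : Finset ℕ) : IsPaddedDistinct (padSort n s) := by
  induction n generalizing s with
  | zero => intro i; exact i.elim0
  | succ n ih =>
    rw [padSort, isPaddedDistinct_snoc_iff]
    refine ⟨ih _, fun x hx => ?_⟩
    obtain ⟨hxs, hx⟩ := mem_erase.1 (nonzeroValues_padSort_subset n _ hx)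
    exact lt_of_le_of_ne (le_sup (f := id) hx) hxs

theorem nonzeroValues_padSort {s : Finset ℕ} (hs : 0 ∉ s) (hn : s.card ≤ n) :
    nonzeroValues (padSort n s) = s := by
  induction n generalizing s with
  | zero => simp [card_eq_zero.1 (Nat.le_zero.1 hn), nonzeroValues]
  | succ n ih =>
    rcases s.eq_empty_or_nonempty with rfl | hne
    · exact subset_empty.1 (nonzeroValues_padSort_subset _ _)
    obtain ⟨M, hM, hsup⟩ := exists_mem_eq_sup s hne id
    rw [padSort, nonzeroValues_snoc, hsup, id_eq, ih (fun h => hs (mem_of_mem_erase h))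
      (by rw [card_erase_of_mem hM]; omega), insert_erase hM, erase_eq_of_notMem hs]

def paddedDistinctEquiv {m : ℕ} (hmn : m ≤ n) :
    {l : Fin n → ℕ // IsPaddedDistinct l ∧ ∑ i, l i = m} ≃
      {s : Finset ℕ // 0 ∉ s ∧ ∑ x ∈ s, x = m} where
  toFun l := ⟨nonzeroValues l.1, zero_notMem_nonzeroValues _, by
    rw [sum_nonzeroValues l.2.1, l.2.2]⟩
  invFun s := ⟨padSort n s.1, isPaddedDistinct_padSort n s.1, by
    have hcard := (card_le_sum_of_zero_notMem s.2.1).trans (s.2.2.trans_le hmn)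
    rw [← sum_nonzeroValues (isPaddedDistinct_padSort n s.1), nonzeroValues_padSort s.2.1 hcard,
      s.2.2]⟩
  left_inv l := Subtype.ext (padSort_nonzeroValues l.2.1)
  right_inv s := Subtype.ext (nonzeroValues_padSort s.2.1
    ((card_le_sum_of_zero_notMem s.2.1).trans (s.2.2.trans_le hmn)))

end

def finsetEquivNodupPartition (m : ℕ) :
    {s : Finset ℕ // 0 ∉ s ∧ ∑ x ∈ s, x = m} ≃ {p : m.Partition // p.parts.Nodup} where
  toFun s := ⟨⟨s.1.val, fun hi => Nat.pos_of_ne_zero fun h => s.2.1 (h ▸ hi), by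
    rw [← Multiset.map_id' s.1.val]; exact s.2.2⟩, s.1.nodup⟩
  invFun p := ⟨⟨p.1.parts, p.2⟩, fun h => (p.1.parts_pos h).ne' rfl, by
    rw [Finset.sum, Multiset.map_id', p.1.parts_sum]⟩
  left_inv _ := rfl
  right_inv _ := rfl

theorem card_isLectureHall_eq_card_distincts {m n : ℕ} (hmn : m ≤ n) :
    Nat.card {l : Fin n → ℕ // IsLectureHall l ∧ ∑ i, l i = m} = #(distincts m) :=
  calc Nat.card {l : Fin n → ℕ // IsLectureHall l ∧ ∑ i, l i = m}
      _ = Nat.card {l : Fin n → ℕ // IsPaddedDistinct l ∧ ∑ i, l i = m} :=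
        Nat.card_congr <| Equiv.subtypeEquivRight fun _ =>
          and_congr_left fun h => isLectureHall_iff_isPaddedDistinct (h ▸ hmn)
      _ = Nat.card {p : m.Partition // p.parts.Nodup} :=
        Nat.card_congr <| (paddedDistinctEquiv hmn).trans (finsetEquivNodupPartition m)
      _ = #(distincts m) := by rw [Nat.card_eq_fintype_card, Fintype.card_subtype]; rfl

theorem card_odd_parts_eq_card_odds (m : ℕ) :
    Nat.card {p : m.Partition // ∀ x ∈ p.parts, Odd x} = #(odds m) := by
  simp [Nat.card_eq_fintype_card, Fintype.card_subtype, odds, restricted, Nat.not_even_iff_odd]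

theorem card_count_parts_le_one_eq_card_distincts (m : ℕ) :
    Nat.card {p : m.Partition // ∀ x ∈ p.parts, p.parts.count x ≤ 1} = #(distincts m) := by
  simp [Nat.card_eq_fintype_card, Fintype.card_subtype, ← countRestricted_two, countRestricted]

/-- Euler's theorem as a limit of the lecture hall theorem: the number
of partitions of `m` into distinct parts equals the number of partitions of `m` into
odd parts, and both equal the number of lecture hall partitions of length `n` with
sum `m` for any `n ≥ m`. -/
theorem euler_limit_of_lecture_hall (m : ℕ) :
    Nat.card {p : Nat.Partition m // ∀ x ∈ p.parts, p.parts.count x ≤ 1} =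
      Nat.card {p : Nat.Partition m // ∀ x ∈ p.parts, Odd x} ∧
    ∀ n : ℕ, m ≤ n →
      Nat.card {l : Fin n → ℕ //
          (∀ i j : Fin n, i ≤ j → (l i : ℚ) / ((i : ℕ) + 1) ≤ (l j : ℚ) / ((j : ℕ) + 1)) ∧
          ∑ i, l i = m} =
      Nat.card {p : Nat.Partition m // ∀ x ∈ p.parts, Odd x} := by
  rw [card_odd_parts_eq_card_odds, card_odds_eq_card_distincts]
  exact ⟨card_count_parts_le_one_eq_card_distincts m,
    fun n hmn => card_isLectureHall_eq_card_distincts hmn⟩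
end

section
/- In a lecture hall partition λ of length n, for each i the ceiling ⌈λᵢ₊₁/(i+1)⌉ satisfies λᵢ ≤ λᵢ₊₁ - ⌈λᵢ₊₁/(i+1)⌉; consequently the sequence ⌈λᵢ/i⌉ is weakly increasing in i. -/
/-- In a lecture hall partition `λ` of length `n`, for each `i` we have
`λᵢ ≤ λᵢ₊₁ - ⌈λᵢ₊₁/(i+1)⌉`; consequently the sequence `⌈λᵢ/i⌉` is weakly increasing. -/
theorem lecture_hall_ceil_properties (n : ℕ) (l : ℕ → ℕ)
    (h : ∀ i, 1 ≤ i → i < n → (l i : ℚ) / i ≤ (l (i + 1) : ℚ) / (i + 1)) :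
    (∀ i, 1 ≤ i → i < n → (l i : ℤ) ≤ (l (i + 1) : ℤ) - ⌈(l (i + 1) : ℚ) / (i + 1)⌉) ∧
    (∀ i, 1 ≤ i → i < n → ⌈(l i : ℚ) / i⌉ ≤ ⌈(l (i + 1) : ℚ) / (i + 1)⌉) := by
  constructor
  · intro i h1 h2
    have hi : (0 : ℚ) < i := by exact_mod_cast h1
    have hi1 : (0 : ℚ) < (i : ℚ) + 1 := by positivity
    have hh := h i h1 h2
    have key : (l i : ℚ) + (l (i + 1) : ℚ) / (i + 1) ≤ (l (i + 1) : ℚ) := by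
      rw [div_le_div_iff₀ hi hi1] at hh
      rw [← sub_nonneg]
      have : (l (i + 1) : ℚ) - ((l i : ℚ) + (l (i + 1) : ℚ) / (i + 1)) =
          ((l (i + 1) : ℚ) * i - (l i : ℚ) * (i + 1)) / (i + 1) := by
        field_simp; ring
      rw [this]
      exact div_nonneg (by linarith) (le_of_lt hi1)
    have hc : ⌈(l i : ℚ) + (l (i + 1) : ℚ) / (i + 1)⌉ ≤ (l (i + 1) : ℤ) := by
      rw [Int.ceil_le]; push_cast; exact key
    rw [add_comm, show ((l i : ℚ)) = ((l i : ℤ) : ℚ) by push_cast; ring,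
      Int.ceil_add_intCast] at hc
    linarith
  · intro i h1 h2
    exact Int.ceil_mono (h i h1 h2)
end

section
/- In a balanced flush abacus on 2n columns, for any bead at position b > n, the number of gaps strictly between b-2n and b is at least n and at most 2n-1. -/
/-!
Gaps are closed under adding `2n`, and balancedness turns each bead `x` into the gap `1 - x`.
So in the window `(b - 2n, b]`, which is a complete residue system mod `2n`, sending a bead `x`
to the representative of `1 - x` gives an injection from beads to gaps: since `b ≥ n`, that
representative lies above `1 - x`. Hence at least half of the `2n` positions are gaps, and
none of them is `b`.
-/

open Finset

theorem add_mul_notMem_of_notMem {B : Set ℤ} {m : ℤ} (hflush : ∀ j ∈ B, j - m ∈ B) {x : ℤ}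
    (hx : x ∉ B) {k : ℤ} (hk : 0 ≤ k) : x + k * m ∉ B := by
  lift k to ℕ using hk
  induction k with
  | zero => simpa using hx
  | succ k ih =>
    intro h
    apply ih
    simpa [add_mul, ← add_assoc] using hflush _ h

theorem card_filter_mem_le_card_filter_notMem {B : Set ℤ} [DecidablePred (· ∈ B)] {m c : ℤ}
    (hm : 0 < m) (hflush : ∀ j ∈ B, j - m ∈ B) (hbal : ∀ j ∈ B, 1 - j ∉ B) (hc : m ≤ 2 * c) :
    #((Ioc (c - m) c).filter (· ∈ B)) ≤ #((Ioc (c - m) c).filter (· ∉ B)) := by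
  have hwin : Set.Ioc (c - m) (c - m + m) = Set.Ioc (c - m) c := by rw [sub_add_cancel]
  refine card_le_card_of_injOn (fun x ↦ toIocMod hm (c - m) (1 - x)) ?_ ?_
  · intro x hx
    simp only [coe_filter, mem_Ioc, Set.mem_ofPred_eq] at hx ⊢
    obtain ⟨⟨hlo, -⟩, hxB⟩ := hx
    have hmem := toIocMod_mem_Ioc hm (c - m) (1 - x)
    rw [hwin] at hmem
    refine ⟨hmem, ?_⟩
    set d := toIocDiv hm (c - m) (1 - x)
    have hd : d < 1 := by
      have := (sub_toIocDiv_zsmul_mem_Ioc hm (c - m) (1 - x)).1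
      rw [smul_eq_mul] at this
      exact Int.lt_of_mul_lt_mul_right (by linarith) hm.le
    rw [← self_sub_toIocDiv_zsmul, smul_eq_mul, sub_eq_add_neg, ← neg_mul]
    exact add_mul_notMem_of_notMem hflush (hbal x hxB) (by omega)
  · intro x hx y hy hxy
    have hx' : x ∈ Set.Ioc (c - m) (c - m + m) := by simpa [hwin] using (mem_filter.1 hx).1
    have hy' : y ∈ Set.Ioc (c - m) (c - m + m) := by simpa [hwin] using (mem_filter.1 hy).1
    obtain ⟨k, hk⟩ := (toIocMod_eq_toIocMod hm).1 hxy
    rw [← (toIocMod_eq_self hm).2 hx', ← (toIocMod_eq_self hm).2 hy']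
    exact (toIocMod_eq_toIocMod hm).2 ⟨-k, by rw [neg_smul, ← hk]; ring⟩

theorem le_two_mul_card_filter_notMem {B : Set ℤ} [DecidablePred (· ∈ B)] {m c : ℤ}
    (hm : 0 < m) (hflush : ∀ j ∈ B, j - m ∈ B) (hbal : ∀ j ∈ B, 1 - j ∉ B) (hc : m ≤ 2 * c) :
    m ≤ 2 * #((Ioc (c - m) c).filter (· ∉ B)) := by
  have hsplit := card_filter_add_card_filter_not (s := Ioc (c - m) c) (· ∈ B)
  have hle := card_filter_mem_le_card_filter_notMem hm hflush hbal hc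
  rw [Int.card_Ioc, sub_sub_cancel] at hsplit
  omega

theorem natCard_notMem_Ioo (B : Set ℤ) [DecidablePred (· ∈ B)] (a c : ℤ) :
    Nat.card {j : ℤ // a < j ∧ j < c ∧ j ∉ B} = #((Ioo a c).filter (· ∉ B)) := by
  rw [← Nat.card_eq_finsetCard]
  exact Nat.card_congr (Equiv.subtypeEquivRight fun j ↦ by simp [and_assoc])

theorem filter_notMem_Ioc_eq_Ioo {B : Set ℤ} [DecidablePred (· ∈ B)] {a c : ℤ} (hc : c ∈ B) :
    (Ioc a c).filter (· ∉ B) = (Ioo a c).filter (· ∉ B) := by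
  ext j
  simp only [mem_filter, mem_Ioc, mem_Ioo]
  constructor
  · rintro ⟨⟨h1, h2⟩, hj⟩
    exact ⟨⟨h1, lt_of_le_of_ne h2 (by rintro rfl; exact hj hc)⟩, hj⟩
  · rintro ⟨⟨h1, h2⟩, hj⟩
    exact ⟨⟨h1, h2.le⟩, hj⟩

/-- In a balanced flush abacus on `2n` columns, for any bead at position
`b > n`, the number of gaps strictly between `b - 2n` and `b` is at least `n` and at
most `2n - 1`. -/
theorem gaps_between_bounds (n : ℕ) (hn : 1 ≤ n) (B : Set ℤ)
    (hflush : ∀ j ∈ B, j - 2 * (n : ℤ) ∈ B)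
    (hbal : ∀ j : ℤ, j ∈ B ↔ (1 - j) ∉ B)
    (b : ℤ) (hb : b ∈ B) (hbn : (n : ℤ) < b) :
    n ≤ Nat.card {j : ℤ // b - 2 * (n : ℤ) < j ∧ j < b ∧ j ∉ B} ∧
    Nat.card {j : ℤ // b - 2 * (n : ℤ) < j ∧ j < b ∧ j ∉ B} ≤ 2 * n - 1 := by
  classical
  rw [natCard_notMem_Ioo]
  constructor
  · have := le_two_mul_card_filter_notMem (c := b) (by omega) hflush
      (fun j hj ↦ (hbal j).1 hj) (by omega)
    rw [filter_notMem_Ioc_eq_Ioo hb] at this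
    omega
  · have := card_filter_le (Ioo (b - 2 * (n : ℤ)) b) (· ∉ B)
    rw [Int.card_Ioo] at this
    omega
end

section
/- In a flush abacus on 2n columns, the function sending a bead b (with b > n) to the number of gaps strictly between b-2n and b is weakly increasing along beads in increasing position order. -/
/-- In a flush abacus on `2n` columns, the number of gaps strictly
between `b - 2n` and `b` is weakly increasing along beads `b > n` in increasing
position order. -/
theorem gaps_between_monotone (n : ℕ) (hn : 1 ≤ n) (B : Set ℤ)
    (hflush : ∀ j ∈ B, j - 2 * (n : ℤ) ∈ B)
    (b b' : ℤ) (hb : b ∈ B) (hb' : b' ∈ B) (hbn : (n : ℤ) < b) (hle : b ≤ b') :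
    Nat.card {j : ℤ // b - 2 * (n : ℤ) < j ∧ j < b ∧ j ∉ B} ≤
      Nat.card {j : ℤ // b' - 2 * (n : ℤ) < j ∧ j < b' ∧ j ∉ B} := by
  set N : ℤ := 2 * (n : ℤ) with hNdef
  have hn' : (1 : ℤ) ≤ (n : ℤ) := by exact_mod_cast hn
  have hNpos : 0 < N := by omega
  -- closure of gaps under adding multiples of N
  have iter : ∀ (k : ℕ) (j : ℤ), j + N * k ∈ B → j ∈ B := by
    intro k
    induction k with
    | zero => simpa
    | succ m ih =>
      intro j hj
      apply ih
      have h2 := hflush _ hj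
      have : j + N * (m + 1 : ℕ) - 2 * (n : ℤ) = j + N * m := by push_cast; ring
      rwa [this] at h2
  have hfin : (Set.Ioo (b' - N) b').Finite := Set.finite_Ioo _ _
  have : Finite {j : ℤ // b' - N < j ∧ j < b' ∧ j ∉ B} := by
    have : Set.Finite {j : ℤ | b' - N < j ∧ j < b' ∧ j ∉ B} :=
      hfin.subset (fun j hj => ⟨hj.1, hj.2.1⟩)
    exact this.to_subtype
  have key : ∀ j : ℤ, b - N < j → j < b → j ∉ B →
      b' - N < j + N * ((b' - 1 - j) / N) ∧ j + N * ((b' - 1 - j) / N) < b' ∧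
        j + N * ((b' - 1 - j) / N) ∉ B := by
    intro j h1 h2 h3
    set k : ℤ := (b' - 1 - j) / N with hk
    have hknn : 0 ≤ k := Int.ediv_nonneg (by omega) hNpos.le
    have hmod : N * k + (b' - 1 - j) % N = b' - 1 - j := by
      rw [hk]; exact Int.mul_ediv_add_emod _ _
    have hr0 : 0 ≤ (b' - 1 - j) % N := Int.emod_nonneg _ hNpos.ne'
    have hrN : (b' - 1 - j) % N < N := Int.emod_lt_of_pos _ hNpos
    have hub : j + N * k < b' := by omega
    have hnotB : j + N * k ∉ B := by
      intro hmem
      apply h3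
      apply iter k.toNat j
      rwa [Int.toNat_of_nonneg hknn]
    have hlb : b' - N < j + N * k := by
      rcases lt_or_eq_of_le (show b' - N ≤ j + N * k by omega) with h | h
      · exact h
      · exfalso
        apply hnotB
        rw [← h]
        exact hflush _ hb'
    exact ⟨hlb, hub, hnotB⟩
  apply Nat.card_le_card_of_injective
    (fun x => ⟨x.1 + N * ((b' - 1 - x.1) / N),
      key x.1 x.2.1 x.2.2.1 x.2.2.2⟩ :
      {j : ℤ // b - N < j ∧ j < b ∧ j ∉ B} → {j : ℤ // b' - N < j ∧ j < b' ∧ j ∉ B})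
  rintro ⟨j1, hj1⟩ ⟨j2, hj2⟩ heq
  simp only [Subtype.mk.injEq] at heq ⊢
  have hdvd : N ∣ j1 - j2 := ⟨(b' - 1 - j2) / N - (b' - 1 - j1) / N, by linarith [heq]⟩
  obtain ⟨c, hc⟩ := hdvd
  have hlt1 : N * c < N := by omega
  have hlt2 : -N < N * c := by omega
  have hc1 : c < 1 := by nlinarith
  have hc2 : -1 < c := by nlinarith
  have hc0 : c = 0 := by omega
  rw [hc0, mul_zero] at hc
  omega
end

section
/- If λ and λ* are the lecture hall partitions corresponding to a (t-1)-abacus and the t-abacus obtained by adding a bead at position bᵢ + 2n below the defining bead bᵢ of class i, then |λ*| - |λ| = n + i. -/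
/-!
Write `N(x, y)` for the number of positions in `[1, y]` lying in the class of the bead `x`.
Splitting the `i`-active positions by class, `|λ| = ∑ N(x, y)` over pairs of defining beads
`x ≤ y`. Moving the bead `z = bᵢ` to `z + 2n` only affects the pairs through `z`: a pair `(x, z)`
with `x ≤ z` becomes `(x, z + 2n)`, which gains one position in each of the two columns of the
class of `x`, while a pair `(z, y)` with `y > z` becomes `(y, z + 2n)`, and
`N(y, z + 2n) = N(z, y) + 1`. Hence `|λ*| - |λ| = 2 #{x ≤ z} + #{y > z} = n + #{x ≤ z}`.

Both counting identities follow by counting residues modulo `2n` with floors; the second one rests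
on `⌊-v / 2n⌋ + ⌊(v - 1) / 2n⌋ = -1`, which ties together the two columns `x` and `1 - x` of a
class. Balance keeps the counts right when beads sit at non-positive positions.
-/

/-- The column (in `{1, …, 2n}`) of position `j` on an abacus with `2n` columns. -/
def colOf (n : ℕ) (j : ℤ) : ℤ := (j - 1) % (2 * n) + 1

/-- Position `p` has class `i`: it lies in the column of the defining bead `b i`
or in its dual column. -/
def classEq (n : ℕ) (b : Fin n → ℤ) (i : Fin n) (p : ℤ) : Prop :=
  colOf n p = colOf n (b i) ∨ colOf n p = 2 * n + 1 - colOf n (b i)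

/-- `b` lists the defining beads (in reading order) of a balanced flush abacus diagram
on `2n` columns. -/
def IsAbacusDefiningBeads (n : ℕ) (b : Fin n → ℤ) : Prop :=
  StrictMono b ∧
  (∀ i j : Fin n, i ≠ j →
      colOf n (b i) ≠ colOf n (b j) ∧ colOf n (b i) ≠ 2 * n + 1 - colOf n (b j)) ∧
  (∀ i j : Fin n, 1 - 2 * (n : ℤ) - b j < b i)

/-- The `i`-th part of the lecture hall partition of the abacus with defining beads `b`:
the number of `i`-active positions, i.e. positions `p` with `1 ≤ p ≤ b i` whose class
is at most `i`. -/
noncomputable def lamPart (n : ℕ) (b : Fin n → ℤ) (i : Fin n) : ℕ :=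
  Nat.card {p : ℤ // 1 ≤ p ∧ p ≤ b i ∧ ∃ j : Fin n, j ≤ i ∧ classEq n b j p}

open Finset

namespace Int

lemma ediv_eq_of_le_of_lt {a d q : ℤ} (hd : 0 < d) (h₁ : d * q ≤ a) (h₂ : a < d * q + d) :
    a / d = q :=
  ((Int.ediv_emod_unique (r := a - d * q) hd).mpr ⟨by ring, by linarith, by linarith⟩).1

lemma neg_ediv_add_sub_one_ediv {d : ℤ} (hd : 0 < d) (v : ℤ) : -v / d + (v - 1) / d = -1 := by
  have h₁ := Int.ediv_mul_le (v - 1) hd.ne'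
  have h₂ := Int.lt_ediv_add_one_mul_self (v - 1) hd
  rw [ediv_eq_of_le_of_lt hd (q := -((v - 1) / d) - 1) (by linarith) (by linarith)]
  ring

end Int

noncomputable def resCount (d v m : ℤ) : ℕ := #{p ∈ Ioc 0 m | p ≡ v [ZMOD d]}

lemma resCount_of_nonpos (d v : ℤ) {m : ℤ} (hm : m ≤ 0) : resCount d v m = 0 := by
  simp [resCount, Ioc_eq_empty_of_le hm]

lemma resCount_eq {d : ℤ} (hd : 0 < d) (v : ℤ) {m : ℤ} (hm : 0 ≤ m) :
    (resCount d v m : ℤ) = (m - v) / d - -v / d := by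
  have hmono : -v / d ≤ (m - v) / d := Int.ediv_le_ediv hd (by linarith)
  lift d to ℕ using hd.le
  rw [resCount, Int.Ioc_filter_modEq_card 0 m (by exact_mod_cast hd) v]
  push_cast
  rw [zero_sub, ← Int.cast_neg, ← Int.cast_sub, Rat.floor_intCast_div_natCast,
    Rat.floor_intCast_div_natCast]
  omega

lemma resCount_add_period {d : ℤ} (hd : 0 < d) (v : ℤ) {m : ℤ} (hm : 0 ≤ m) :
    resCount d v (m + d) = resCount d v m + 1 := by
  have h₁ := resCount_eq hd v hm
  have h₂ := resCount_eq hd v (m := m + d) (by linarith)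
  rw [show m + d - v = m - v + 1 * d by ring, Int.add_mul_ediv_right _ _ hd.ne'] at h₂
  omega

section PairSum

variable {α M : Type*} [LinearOrder α] [AddCommMonoid M]

def pairSum (f : α → α → M) (s : Finset α) : M := ∑ y ∈ s, ∑ x ∈ s with x ≤ y, f x y

lemma pairSum_insert (f : α → α → M) {s : Finset α} {a : α} (ha : a ∉ s) :
    pairSum f (insert a s) = pairSum f s + ∑ x ∈ s with x < a, f x a
      + ∑ y ∈ s with a < y, f a y + f a a := by
  have hne : ∀ y ∈ s, y ≠ a := fun y hy => ne_of_mem_of_not_mem hy ha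
  have hrow : ∀ y ∈ s, ∑ x ∈ insert a s with x ≤ y, f x y
      = ∑ x ∈ s with x ≤ y, f x y + if a < y then f a y else 0 := by
    intro y hy
    rw [filter_insert]
    by_cases hay : a < y
    · rw [if_pos hay.le, if_pos hay, sum_insert (fun h => ha (mem_filter.mp h).1), add_comm]
    · rw [if_neg fun h => hay (lt_of_le_of_ne h (hne y hy).symm), if_neg hay, add_zero]
  have hcol : {x ∈ s | x ≤ a} = {x ∈ s | x < a} :=
    filter_congr fun x hx => ⟨fun h => lt_of_le_of_ne h (hne x hx), le_of_lt⟩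
  rw [pairSum, pairSum, sum_insert ha, filter_insert, if_pos le_rfl,
    sum_insert fun h => ha (mem_filter.mp h).1, sum_congr rfl hrow, sum_add_distrib,
    ← sum_filter, hcol]
  abel

end PairSum

-- The dual column `2n + 1 - c` of the column `c` of `x` is the residue class of `1 - x`.
def InClass (n : ℕ) (x p : ℤ) : Prop := p ≡ x [ZMOD 2 * n] ∨ p ≡ 1 - x [ZMOD 2 * n]

instance (n : ℕ) (x : ℤ) : DecidablePred (InClass n x) := fun _ => instDecidableOr

noncomputable def classCount (n : ℕ) (x m : ℤ) : ℕ := #{p ∈ Ioc 0 m | InClass n x p}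

def ClassDisjoint (n : ℕ) (x y : ℤ) : Prop := ∀ p, InClass n x p → ¬ InClass n y p

section Classes

variable {n : ℕ}

lemma inClass_congr {x y : ℤ} (h : x ≡ y [ZMOD 2 * n]) (p : ℤ) : InClass n x p ↔ InClass n y p :=
  or_congr ⟨fun hp => hp.trans h, fun hp => hp.trans h.symm⟩
    ⟨fun hp => hp.trans (h.sub_left 1), fun hp => hp.trans (h.sub_left 1).symm⟩

lemma classCount_congr {x y : ℤ} (h : x ≡ y [ZMOD 2 * n]) (m : ℤ) :
    classCount n x m = classCount n y m := by
  simp only [classCount, inClass_congr h]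

lemma classDisjoint_add_period_left (x y : ℤ) :
    ClassDisjoint n (x + 2 * n) y ↔ ClassDisjoint n x y := by
  simp only [ClassDisjoint, inClass_congr Int.add_modEq_right]

lemma classDisjoint_add_period_right (x y : ℤ) :
    ClassDisjoint n x (y + 2 * n) ↔ ClassDisjoint n x y := by
  simp only [ClassDisjoint, inClass_congr Int.add_modEq_right]

lemma classCount_eq_add (x m : ℤ) :
    classCount n x m = resCount (2 * n) x m + resCount (2 * n) (1 - x) m := by
  rw [classCount, resCount, resCount, ← card_union_of_disjoint, ← filter_or]
  · rfl
  · refine disjoint_filter.mpr fun p _ hx hx' => ?_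
    have h : 2 * (n : ℤ) ∣ 1 - x - x := (hx.symm.trans hx').dvd
    have : (2 : ℤ) ∣ 1 - x - x := dvd_trans (Dvd.intro _ rfl) h
    omega

lemma classCount_add_period_of_le (hn : 0 < n) {x z : ℤ} (hxz : x ≤ z)
    (hbal : 1 - 2 * n < x + z) : classCount n x (z + 2 * n) = classCount n x z + 2 := by
  have hd : (0 : ℤ) < 2 * n := by omega
  rw [classCount_eq_add, classCount_eq_add]
  rcases le_or_gt 0 z with hz | hz
  · rw [resCount_add_period hd _ hz, resCount_add_period hd _ hz]
    ring
  · have h₁ := resCount_eq hd x (m := z + 2 * n) (by omega)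
    have h₂ := resCount_eq hd (1 - x) (m := z + 2 * n) (by omega)
    rw [Int.ediv_eq_of_le_of_lt hd (q := 1) (by linarith) (by linarith),
      Int.ediv_eq_of_le_of_lt hd (q := 0) (by linarith) (by linarith)] at h₁
    rw [Int.ediv_eq_of_le_of_lt hd (q := 0) (by linarith) (by linarith),
      Int.ediv_eq_of_le_of_lt hd (q := -1) (by linarith) (by linarith)] at h₂
    rw [resCount_of_nonpos _ _ hz.le, resCount_of_nonpos _ _ hz.le]
    omega

lemma classCount_add_period_of_lt {x y : ℤ} (hxy : x < y) (hyx : y < x + 2 * n)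
    (hbal : 1 - 2 * n < x + y) : classCount n y (x + 2 * n) = classCount n x y + 1 := by
  have hd : (0 : ℤ) < 2 * n := by omega
  rw [classCount_eq_add, classCount_eq_add]
  have h₁ := resCount_eq hd y (m := x + 2 * n) (by omega)
  have h₂ := resCount_eq hd (1 - y) (m := x + 2 * n) (by omega)
  rw [Int.ediv_eq_of_le_of_lt hd (q := 0) (by linarith) (by linarith)] at h₁
  rw [neg_sub] at h₂
  rcases le_or_gt 0 y with hy | hy
  · have h₃ := resCount_eq hd x hy
    have h₄ := resCount_eq hd (1 - x) hy
    rw [Int.ediv_eq_of_le_of_lt hd (q := 0) (by linarith) (by linarith)] at h₃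
    rw [neg_sub] at h₄
    rw [show x + 2 * n - (1 - y) = y - (1 - x) + 1 * (2 * n) by ring,
      Int.add_mul_ediv_right _ _ hd.ne'] at h₂
    have r₁ := Int.neg_ediv_add_sub_one_ediv hd x
    have r₂ := Int.neg_ediv_add_sub_one_ediv hd y
    omega
  · rw [Int.ediv_eq_of_le_of_lt hd (q := 0) (by linarith) (by linarith)] at h₁
    rw [Int.ediv_eq_of_le_of_lt hd (q := 0) (by linarith) (by linarith),
      Int.ediv_eq_of_le_of_lt hd (q := -1) (by linarith) (by linarith)] at h₂
    rw [resCount_of_nonpos _ _ hy.le, resCount_of_nonpos _ _ hy.le]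
    omega

lemma colOf_eq_colOf_iff (p q : ℤ) : colOf n p = colOf n q ↔ p ≡ q [ZMOD 2 * n] := by
  rw [colOf, colOf, add_left_inj]
  exact ⟨fun h => by simpa using Int.ModEq.add_right 1 h, fun h => h.sub_right 1⟩

lemma colOf_one_sub (hn : 0 < n) (q : ℤ) : colOf n (1 - q) = 2 * n + 1 - colOf n q := by
  have hd : (0 : ℤ) < 2 * n := by omega
  have h₀ := Int.emod_nonneg (q - 1) hd.ne'
  have h₁ := Int.emod_lt_of_pos (q - 1) hd
  have h₂ := Int.emod_add_mul_ediv (q - 1) (2 * n)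
  rw [colOf, colOf,
    show 1 - q - 1 = (2 * n - 1 - (q - 1) % (2 * n)) + 2 * n * (-((q - 1) / (2 * n)) - 1) by
      linarith,
    Int.add_mul_emod_self_left, Int.emod_eq_of_lt (by omega) (by omega)]
  ring

lemma classEq_iff (hn : 0 < n) (b : Fin n → ℤ) (k : Fin n) (p : ℤ) :
    classEq n b k p ↔ InClass n (b k) p := by
  rw [classEq, InClass, ← colOf_one_sub hn, colOf_eq_colOf_iff, colOf_eq_colOf_iff]

lemma classDisjoint_of_colOf (hn : 0 < n) {x y : ℤ}
    (h : colOf n x ≠ colOf n y ∧ colOf n x ≠ 2 * n + 1 - colOf n y) : ClassDisjoint n x y := by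
  rw [← colOf_one_sub hn, Ne, Ne, colOf_eq_colOf_iff, colOf_eq_colOf_iff] at h
  rintro p (hx | hx) (hy | hy)
  · exact h.1 (hx.symm.trans hy)
  · exact h.2 (hx.symm.trans hy)
  · exact h.2 (by simpa using (hx.symm.trans hy).sub_left 1)
  · exact h.1 (by simpa using (hx.symm.trans hy).sub_left 1)

lemma lamPart_eq_sum_classCount (hn : 0 < n) {b : Fin n → ℤ} (hb : Function.Injective b)
    (hdisj : (Set.range b).Pairwise (ClassDisjoint n)) (j : Fin n) :
    lamPart n b j = ∑ k ∈ Iic j, classCount n (b k) (b j) := by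
  have hset : {p : ℤ | 1 ≤ p ∧ p ≤ b j ∧ ∃ k ≤ j, classEq n b k p}
      = ↑((Iic j).biUnion fun k => {p ∈ Ioc 0 (b j) | InClass n (b k) p}) := by
    ext p
    simp only [Set.mem_ofPred_eq, coe_biUnion, coe_Iic, Set.mem_iUnion, coe_filter, mem_Ioc,
      Set.mem_Iic, classEq_iff hn, exists_prop]
    constructor
    · rintro ⟨h₁, h₂, k, hk, hp⟩
      exact ⟨k, hk, ⟨by omega, h₂⟩, hp⟩
    · rintro ⟨k, hk, ⟨h₁, h₂⟩, hp⟩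
      exact ⟨by omega, h₂, k, hk, hp⟩
  change Nat.card ↥{p : ℤ | 1 ≤ p ∧ p ≤ b j ∧ ∃ k ≤ j, classEq n b k p} = _
  rw [hset, Nat.card_coe_set_eq, Set.ncard_coe_finset, card_biUnion]
  · rfl
  · intro k _ k' _ hkk'
    exact disjoint_filter.mpr fun p _ => hdisj ⟨k, rfl⟩ ⟨k', rfl⟩ (hb.ne hkk') p

lemma sum_lamPart_eq_pairSum (hn : 0 < n) {b : Fin n → ℤ} (hb : StrictMono b)
    (hdisj : (Set.range b).Pairwise (ClassDisjoint n)) :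
    ∑ j, lamPart n b j = pairSum (classCount n) (univ.image b) := by
  rw [pairSum, sum_image hb.injective.injOn]
  refine sum_congr rfl fun j _ => ?_
  rw [lamPart_eq_sum_classCount hn hb.injective hdisj, filter_image,
    sum_image hb.injective.injOn]
  congr 1
  ext k
  simp [hb.le_iff_le]

lemma pairwise_classDisjoint_insert_add_period {S : Set ℤ} (hS : S.Pairwise (ClassDisjoint n))
    {z : ℤ} (hz : z ∈ S) : (insert (z + 2 * n) (S \ {z})).Pairwise (ClassDisjoint n) := by
  refine Set.pairwise_insert.mpr ⟨hS.mono Set.sdiff_subset, fun y hy _ => ?_⟩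
  have hzy : z ≠ y := Ne.symm hy.2
  rw [classDisjoint_add_period_left, classDisjoint_add_period_right]
  exact ⟨hS hz hy.1 hzy, hS hy.1 hz hzy.symm⟩

lemma pairSum_classCount_insert_erase {B : Finset ℤ} {z : ℤ} (hz : z ∈ B)
    (hlast : ∀ x ∈ B, x < z + 2 * n) (hbal : ∀ x ∈ B, 1 - 2 * n < x + z) :
    pairSum (classCount n) (insert (z + 2 * n) (B.erase z))
      = pairSum (classCount n) B + #B + #{x ∈ B | x < z} + 1 := by
  have hn : 0 < n := by have := hlast z hz; omega
  set s := B.erase z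
  have hzs : z ∉ s := notMem_erase z B
  have hs : ∀ x ∈ s, x ∈ B := fun x hx => mem_of_mem_erase hx
  have htop : z + 2 * n ∉ s := fun h => (hlast _ (hs _ h)).false
  have hbelow : {x ∈ s | x < z} = {x ∈ B | x < z} := by
    rw [filter_erase, erase_eq_of_notMem fun h => (mem_filter.mp h).2.false]
  have habove : {x ∈ s | ¬ x < z} = {x ∈ s | z < x} :=
    filter_congr fun x hx =>
      ⟨fun h => lt_of_le_of_ne (not_lt.mp h) (ne_of_mem_of_not_mem hx hzs).symm, fun h => h.not_gt⟩
  have hsum_below : ∑ x ∈ s with x < z, classCount n x (z + 2 * n)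
      = ∑ x ∈ s with x < z, classCount n x z + 2 * #{x ∈ s | x < z} := by
    rw [sum_congr rfl fun x hx => classCount_add_period_of_le hn (mem_filter.mp hx).2.le
      (hbal x (hs x (mem_filter.mp hx).1)), sum_add_distrib, sum_const, smul_eq_mul, mul_comm]
  have hsum_above : ∑ x ∈ s with ¬ x < z, classCount n x (z + 2 * n)
      = ∑ y ∈ s with z < y, classCount n z y + #{x ∈ s | z < x} := by
    rw [habove, sum_congr rfl fun x hx => classCount_add_period_of_lt (mem_filter.mp hx).2
      (hlast x (hs x (mem_filter.mp hx).1)) (by linarith [hbal x (hs x (mem_filter.mp hx).1)]),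
      sum_add_distrib, sum_const, smul_eq_mul, mul_one]
  have hnew := pairSum_insert (classCount n) htop
  rw [filter_true_of_mem fun x hx => hlast x (hs x hx),
    filter_false_of_mem fun y hy h => (hlast y (hs y hy)).not_gt h, sum_empty, add_zero,
    classCount_congr Int.add_modEq_right, ← sum_filter_add_sum_filter_not s (· < z),
    hsum_below, hsum_above, classCount_add_period_of_le hn le_rfl (by linarith [hbal z hz])] at hnew
  have hold := pairSum_insert (classCount n) hzs
  rw [insert_erase hz] at hold
  have hcard := card_filter_add_card_filter_not (s := s) (· < z)
  rw [habove] at hcard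
  rw [hnew, hold, ← card_erase_add_one hz, ← hbelow, ← hcard]
  ring

end Classes

/-- Classes are 1-indexed: `i : Fin n` is the class `i + 1`. -/
theorem add_bead_sum_increase_general (n : ℕ) (b bstar : Fin n → ℤ)
    (hab : IsAbacusDefiningBeads n b) (i : Fin n)
    (hlast : ∀ j : Fin n, b j < b i + 2 * (n : ℤ))
    (hstar_mono : StrictMono bstar)
    (hstar_range : Set.range bstar = insert (b i + 2 * (n : ℤ)) (Set.range b \ {b i})) :
    ∑ j, lamPart n bstar j = (∑ j, lamPart n b j) + (n + ((i : ℕ) + 1)) := by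
  obtain ⟨hmono, hcols, hbal⟩ := hab
  have hn : 0 < n := i.pos
  have hdisj : (Set.range b).Pairwise (ClassDisjoint n) := by
    rintro _ ⟨j, rfl⟩ _ ⟨k, rfl⟩ hjk
    exact classDisjoint_of_colOf hn (hcols j k (ne_of_apply_ne b hjk))
  have hdisj_star : (Set.range bstar).Pairwise (ClassDisjoint n) :=
    hstar_range ▸ pairwise_classDisjoint_insert_add_period hdisj ⟨i, rfl⟩
  have hrange : univ.image bstar = insert (b i + 2 * n) ((univ.image b).erase (b i)) := by
    apply coe_injective
    simpa using hstar_range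
  have hbelow : #{x ∈ univ.image b | x < b i} = i := by
    rw [filter_image, card_image_of_injective _ hmono.injective]
    simp only [hmono.lt_iff_lt, filter_gt_eq_Iio, Fin.card_Iio]
  rw [sum_lamPart_eq_pairSum hn hstar_mono hdisj_star, sum_lamPart_eq_pairSum hn hmono hdisj,
    hrange, pairSum_classCount_insert_erase (mem_image_of_mem b (mem_univ i))
      (by simpa using hlast) (by simpa using fun j => by linarith [hbal i j]),
    card_image_of_injective _ hmono.injective, card_univ, Fintype.card_fin, hbelow]
  ring

/-- if `λ` and `λ*` are the lecture hall partitions corresponding to a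
`(t-1)`-abacus with defining beads `b` and to the `t`-abacus obtained by adding a bead
at position `bᵢ + 2n` (assumed last in reading order) below the defining bead `bᵢ` of
class `i`, then `|λ*| - |λ| = n + i` (classes being 1-indexed, `i = (i : Fin n) + 1`). -/
theorem add_bead_sum_increase (n : ℕ) (hn : 1 ≤ n) (b bstar : Fin n → ℤ)
    (hab : IsAbacusDefiningBeads n b) (i : Fin n)
    (hlast : ∀ j : Fin n, b j < b i + 2 * (n : ℤ))
    (hstar_mono : StrictMono bstar)
    (hstar_range : Set.range bstar = insert (b i + 2 * (n : ℤ)) (Set.range b \ {b i})) :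
    ∑ j, lamPart n bstar j = (∑ j, lamPart n b j) + (n + ((i : ℕ) + 1)) :=
  add_bead_sum_increase_general n b bstar hab i hlast hstar_mono hstar_range
end
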